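/- arXiv:2001.01908 — 12 statements merged into one kernel-verified Lean document; each statement's English description precedes it below -/
import Mathlib

section
/- Let G be the complete n-partite graph K(p_1,...,p_n) with n ≥ 3 and partite sets V_1,...,V_n, and let D be an orientation of G. Suppose there exist vertices u ∈ V_i and v ∈ V_j with i ≠ j such that the out-neighbourhood of u restricted to V(G) \ V_j equals the out-neighbourhood of v restricted to V(G) \ V_i. Then the diameter of D is at least 3. -/
/-- `hasPath D u v n`: there is a directed walk of length `n` from `u` to `v` in digraph `D`. -/
def hasPath {V : Type*} (D : V → V → Prop) (u v : V) : ℕ → Prop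
  | 0 => u = v
  | n + 1 => ∃ w, D u w ∧ hasPath D w v n

/-- Directed distance in a digraph, `⊤` if unreachable. -/
noncomputable def ddist {V : Type*} (D : V → V → Prop) (u v : V) : ℕ∞ :=
  sInf {n : ℕ∞ | ∃ m : ℕ, hasPath D u v m ∧ n = m}

/-- Diameter of a digraph. -/
noncomputable def ddiam (V : Type*) (D : V → V → Prop) : ℕ∞ :=
  ⨆ u : V, ⨆ v : V, ddist D u v

/-- `D` is an orientation of the simple graph `G`: every arc lies on an edge, and each
edge gets exactly one direction. -/
def IsOrientation {V : Type*} (G : SimpleGraph V) (D : V → V → Prop) : Prop :=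
  (∀ u v, D u v → G.Adj u v) ∧ ∀ u v, G.Adj u v → (D u v ↔ ¬ D v u)

/-- A digraph is strong if every vertex can reach every other. -/
def IsStrong {V : Type*} (D : V → V → Prop) : Prop :=
  ∀ u v : V, ∃ m : ℕ, hasPath D u v m

/-- The orientation number of a graph: minimum diameter over strong orientations. -/
noncomputable def orientationNumber {V : Type*} (G : SimpleGraph V) : ℕ∞ :=
  sInf {n : ℕ∞ | ∃ D : V → V → Prop, IsOrientation G D ∧ IsStrong D ∧ ddiam V D = n}

/-- The complete tripartite graph `K(a,b,c)`. -/
def Ktri (a b c : ℕ) : SimpleGraph (Σ i : Fin 3, Fin (![a, b, c] i)) :=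
  SimpleGraph.completeMultipartiteGraph fun i => Fin (![a, b, c] i)

/-! Orient the edge `uv` as `u → v`. No walk of length at most 2 returns from `v` to `u`: one
of length 1 would reverse the arc, and in a walk `v → w → u` the vertex `w` is adjacent to `u`,
so lies outside `V_i`, hence in `O(v) \ V_i = O(u) \ V_j`; then `u → w` and `w → u`. -/

section Digraph

variable {V : Type*} {D : V → V → Prop}

theorem le_ddist_of_forall_lt_not_hasPath {u v : V} {k : ℕ}
    (h : ∀ m < k, ¬ hasPath D u v m) : (k : ℕ∞) ≤ ddist D u v := by
  refine le_sInf ?_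
  rintro _ ⟨m, hm, rfl⟩
  exact_mod_cast not_lt.1 fun hlt => h m hlt hm

theorem ddist_le_ddiam (u v : V) : ddist D u v ≤ ddiam V D :=
  le_iSup_of_le u (le_iSup_of_le v le_rfl)

theorem three_le_ddist_of_asymm (hasymm : ∀ a b, D a b → ¬ D b a) {u v : V} (huv : D u v)
    (hno : ∀ w, D v w → ¬ D w u) : 3 ≤ ddist D v u := by
  refine le_ddist_of_forall_lt_not_hasPath fun m hm => ?_
  interval_cases m
  · rintro rfl
    exact hasymm _ _ huv huv
  · rintro ⟨w, hvw, rfl⟩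
    exact hasymm _ _ huv hvw
  · rintro ⟨w, hvw, x, hwx, rfl⟩
    exact hno w hvw hwx

end Digraph

namespace IsOrientation

variable {V : Type*} {G : SimpleGraph V} {D : V → V → Prop}

theorem asymm (hD : IsOrientation G D) {a b : V} (hab : D a b) : ¬ D b a :=
  (hD.2 a b (hD.1 a b hab)).1 hab

theorem or_of_adj (hD : IsOrientation G D) {a b : V} (hab : G.Adj a b) : D a b ∨ D b a :=
  or_iff_not_imp_right.2 (hD.2 a b hab).2

end IsOrientation

theorem diam_ge_three_of_eq_outsets_general {n : ℕ} (p : Fin n → ℕ)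
    (D : (Σ i : Fin n, Fin (p i)) → (Σ i : Fin n, Fin (p i)) → Prop)
    (hD : IsOrientation (SimpleGraph.completeMultipartiteGraph fun i => Fin (p i)) D)
    (u v : Σ i : Fin n, Fin (p i)) (hij : u.1 ≠ v.1)
    (hout : {w | D u w ∧ w.1 ≠ v.1} = {w | D v w ∧ w.1 ≠ u.1}) :
    3 ≤ ddiam _ D := by
  wlog huv : D u v generalizing u v
  · exact this v u hij.symm hout.symm ((hD.or_of_adj hij).resolve_left huv)
  have hno : ∀ w, D v w → ¬ D w u := fun w hvw hwu => by
    have hw : w ∈ {w | D u w ∧ w.1 ≠ v.1} := hout ▸ ⟨hvw, hD.1 w u hwu⟩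
    exact hD.asymm hwu hw.1
  exact (three_le_ddist_of_asymm (fun _ _ => hD.asymm) huv hno).trans (ddist_le_ddiam v u)

/-- If two vertices in different parts of a complete multipartite graph (`n ≥ 3` parts) have
equal outsets outside each other's parts, the orientation has diameter at least 3. -/
theorem diam_ge_three_of_eq_outsets {n : ℕ} (hn : 3 ≤ n) (p : Fin n → ℕ)
    (D : (Σ i : Fin n, Fin (p i)) → (Σ i : Fin n, Fin (p i)) → Prop)
    (hD : IsOrientation (SimpleGraph.completeMultipartiteGraph fun i => Fin (p i)) D)
    (u v : Σ i : Fin n, Fin (p i)) (hij : u.1 ≠ v.1)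
    (hout : {w | D u w ∧ w.1 ≠ v.1} = {w | D v w ∧ w.1 ≠ u.1}) :
    3 ≤ ddiam _ D :=
  diam_ge_three_of_eq_outsets_general p D hD u v hij hout
end

section
/- For any integers q ≥ p ≥ 3, if there exists a strong orientation of the complete tripartite graph K(2,p,q) with diameter 2, then q ≤ C(p, ⌊p/2⌋). -/
/-!
Write `A = {a₀, a₁}`, `B`, `C` for the parts of sizes `2`, `p`, `q`. For `c ∈ C` let
`E(c) ⊆ A` and `S(c) ⊆ B` be its out-neighbourhoods, and let `O(aᵢ) ⊆ B` be that of `aᵢ`.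
In a diameter-two orientation, two-step paths from `c` into `B` and from `B` into `c` force
`⋂_{i ∈ E(c)} O(aᵢ)ᶜ ⊆ S(c) ⊆ ⋃_{i ∉ E(c)} O(aᵢ)ᶜ`, and two-step paths between `c ≠ c'`
with `E(c) = E(c')` must pass through `B`, so those `S(c)` are pairwise incomparable. Sperner's
theorem in each interval bounds every class `{c | E(c) = E}`; the classes `E = ∅` and `E = A`
have at most one member. Two-step paths inside `B` rule out `O(a₀) = O(a₁)` once `p ≥ 3`, so
one of the classes `E = {a₀}`, `E = {a₁}` is empty, and the three remaining classes together
fit into `C(p, ⌊p/2⌋)`.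
-/

open Finset

lemma Nat.choose_half_le_choose_half {m n : ℕ} (h : m ≤ n) :
    m.choose (m / 2) ≤ n.choose (n / 2) :=
  (Nat.choose_le_choose _ h).trans (Nat.choose_le_middle _ _)

lemma Nat.choose_half_lt_choose_half_succ {n : ℕ} (hn : 1 ≤ n) :
    n.choose (n / 2) < (n + 1).choose ((n + 1) / 2) :=
  calc n.choose (n / 2) < n.choose (n / 2) + n.choose (n / 2 + 1) :=
        Nat.lt_add_of_pos_right (Nat.choose_pos (by omega))
    _ = (n + 1).choose (n / 2 + 1) := (Nat.choose_succ_succ' _ _).symm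
    _ ≤ (n + 1).choose ((n + 1) / 2) := Nat.choose_le_middle _ _

lemma Nat.choose_half_add_le {m : ℕ} (hm : 1 ≤ m) (t : ℕ) :
    m.choose (m / 2) + t ≤ (m + t).choose ((m + t) / 2) := by
  induction t with
  | zero => rfl
  | succ t ih =>
    have := Nat.choose_half_lt_choose_half_succ (n := m + t) (by omega)
    show m.choose (m / 2) + (t + 1) ≤ (m + t + 1).choose ((m + t + 1) / 2)
    omega

lemma Nat.add_choose_half_le {m p t : ℕ} (hp : 3 ≤ p) (ht : t ≤ 2) (h : m + t ≤ p) :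
    t + m.choose (m / 2) ≤ p.choose (p / 2) := by
  rcases Nat.eq_zero_or_pos m with rfl | hm
  · have : Nat.choose 3 (3 / 2) ≤ p.choose (p / 2) := Nat.choose_half_le_choose_half hp
    norm_num at this ⊢
    omega
  · have := Nat.choose_half_add_le hm t
    have := Nat.choose_half_le_choose_half h
    omega

theorem IsAntichain.card_le_of_subset_Icc {α : Type*} [DecidableEq α] {𝒜 : Finset (Finset α)}
    {L U : Finset α} (h𝒜 : IsAntichain (· ⊆ ·) (𝒜 : Set (Finset α))) (hLU : 𝒜 ⊆ Icc L U) :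
    #𝒜 ≤ (#(U \ L)).choose (#(U \ L) / 2) := by
  set T := U \ L
  let g : Finset α → Finset T := fun s => s.subtype (· ∈ T)
  have hg : ∀ s ∈ 𝒜, ∀ s' ∈ 𝒜, g s ⊆ g s' → s ⊆ s' := by
    intro s hs s' hs' h x hx
    by_cases hxL : x ∈ L
    · exact (mem_Icc.1 (hLU hs')).1 hxL
    · have hxT : x ∈ T := mem_sdiff.2 ⟨(mem_Icc.1 (hLU hs)).2 hx, hxL⟩
      simpa [g] using h (mem_subtype.2 hx : (⟨x, hxT⟩ : T) ∈ g s)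
  have hinj : Set.InjOn g 𝒜 := fun s hs s' hs' h =>
    (hg s hs s' hs' h.le).antisymm (hg s' hs' s hs h.ge)
  have hanti : IsAntichain (· ⊆ ·) ((𝒜.image g : Finset (Finset T)) : Set (Finset T)) := by
    rw [coe_image]
    rintro _ ⟨s, hs, rfl⟩ _ ⟨s', hs', rfl⟩ hne hsub
    exact h𝒜 hs hs' (fun h => hne (h ▸ rfl)) (hg s hs s' hs' hsub)
  simpa [card_image_of_injOn hinj] using hanti.sperner

def ReachesInTwo {V : Type*} (D : V → V → Prop) : Prop :=
  ∀ u v, u ≠ v → D u v ∨ ∃ w, D u w ∧ D w v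

lemma reachesInTwo_of_ddiam_le {V : Type*} {D : V → V → Prop} (h : ddiam V D ≤ 2) :
    ReachesInTwo D := by
  intro u v huv
  have hlt : ddist D u v < 3 :=
    ((le_iSup₂ (f := fun u v => ddist D u v) u v).trans h).trans_lt (by norm_num)
  obtain ⟨_, ⟨m, hm, rfl⟩, hm3⟩ := sInf_lt_iff.1 hlt
  have : m < 3 := by exact_mod_cast hm3
  interval_cases m
  · exact absurd hm huv
  · obtain ⟨w, hw, rfl⟩ := hm
    exact Or.inl hw
  · obtain ⟨w, hw, w', hw', rfl⟩ := hm
    exact Or.inr ⟨w, hw, hw'⟩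

abbrev KtriVert (a p q : ℕ) : Type := Σ i : Fin 3, Fin (![a, p, q] i)

namespace KtriVert

variable {a p q : ℕ}

def ofA (i : Fin a) : KtriVert a p q := ⟨0, i⟩

def ofB (j : Fin p) : KtriVert a p q := ⟨1, j⟩

def ofC (k : Fin q) : KtriVert a p q := ⟨2, k⟩

lemma cases (w : KtriVert a p q) : (∃ i, w = ofA i) ∨ (∃ j, w = ofB j) ∨ ∃ k, w = ofC k := by
  obtain ⟨n, x⟩ := w
  fin_cases n
  exacts [Or.inl ⟨x, rfl⟩, Or.inr (Or.inl ⟨x, rfl⟩), Or.inr (Or.inr ⟨x, rfl⟩)]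

lemma ofB_injective : Function.Injective (ofB : Fin p → KtriVert a p q) :=
  fun _ _ h => eq_of_heq (Sigma.mk.inj h).2

lemma ofC_injective : Function.Injective (ofC : Fin q → KtriVert a p q) :=
  fun _ _ h => eq_of_heq (Sigma.mk.inj h).2

lemma ofA_ne_ofC {i : Fin a} {k : Fin q} : (ofA i : KtriVert a p q) ≠ ofC k :=
  ne_of_apply_ne Sigma.fst (by simp [ofA, ofC])

lemma ofB_ne_ofC {j : Fin p} {k : Fin q} : (ofB j : KtriVert a p q) ≠ ofC k :=
  ne_of_apply_ne Sigma.fst (by simp [ofB, ofC])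

end KtriVert

open KtriVert

section Orientation

open scoped Classical

variable {a p q : ℕ} {D : KtriVert a p q → KtriVert a p q → Prop}

noncomputable def outAB (D : KtriVert a p q → KtriVert a p q → Prop) (i : Fin a) :
    Finset (Fin p) :=
  {j | D (ofA i) (ofB j)}

noncomputable def outCB (D : KtriVert a p q → KtriVert a p q → Prop) (k : Fin q) :
    Finset (Fin p) :=
  {j | D (ofC k) (ofB j)}

noncomputable def outCA (D : KtriVert a p q → KtriVert a p q → Prop) (k : Fin q) :
    Finset (Fin a) :=
  {i | D (ofC k) (ofA i)}

lemma mem_outAB {i : Fin a} {j : Fin p} : j ∈ outAB D i ↔ D (ofA i) (ofB j) := by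
  simp [outAB]

lemma mem_outCB {k : Fin q} {j : Fin p} : j ∈ outCB D k ↔ D (ofC k) (ofB j) := by
  simp [outCB]

lemma mem_outCA {k : Fin q} {i : Fin a} : i ∈ outCA D k ↔ D (ofC k) (ofA i) := by
  simp [outCA]

lemma fst_ne_of_arc (hD : IsOrientation (Ktri a p q) D) {u v : KtriVert a p q} (h : D u v) :
    u.1 ≠ v.1 :=
  hD.1 u v h

lemma arc_iff_not_arc (hD : IsOrientation (Ktri a p q) D) {u v : KtriVert a p q}
    (h : u.1 ≠ v.1) : D v u ↔ ¬ D u v :=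
  hD.2 v u h.symm

lemma arc_ofB_ofA_iff (hD : IsOrientation (Ktri a p q) D) {i : Fin a} {j : Fin p} :
    D (ofB j) (ofA i) ↔ j ∉ outAB D i := by
  rw [mem_outAB, arc_iff_not_arc hD (by simp [ofA, ofB])]

lemma arc_ofB_ofC_iff (hD : IsOrientation (Ktri a p q) D) {j : Fin p} {k : Fin q} :
    D (ofB j) (ofC k) ↔ j ∉ outCB D k := by
  rw [mem_outCB, arc_iff_not_arc hD (by simp [ofB, ofC])]

lemma arc_ofA_ofC_iff (hD : IsOrientation (Ktri a p q) D) {i : Fin a} {k : Fin q} :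
    D (ofA i) (ofC k) ↔ i ∉ outCA D k := by
  rw [mem_outCA, arc_iff_not_arc hD (by simp [ofA, ofC])]

lemma not_outCB_subset_of_outCA_eq (hD : IsOrientation (Ktri a p q) D) (h2 : ReachesInTwo D)
    {k k' : Fin q} (hkk' : k ≠ k')
    (hE : outCA D k = outCA D k') : ¬ outCB D k ⊆ outCB D k' := by
  intro hsub
  obtain hd | ⟨w, hkw, hwk'⟩ := h2 (ofC k) (ofC k') (ofC_injective.ne hkk')
  · exact fst_ne_of_arc hD hd rfl
  rcases KtriVert.cases w with ⟨i, rfl⟩ | ⟨j, rfl⟩ | ⟨k'', rfl⟩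
  · exact (arc_ofA_ofC_iff hD).1 hwk' (hE ▸ mem_outCA.2 hkw)
  · exact (arc_ofB_ofC_iff hD).1 hwk' (hsub (mem_outCB.2 hkw))
  · exact fst_ne_of_arc hD hkw rfl

lemma outAB_nonempty_of_mem_outCA (hD : IsOrientation (Ktri a p q) D) (h2 : ReachesInTwo D)
    {i : Fin a} {k : Fin q} (hi : i ∈ outCA D k) :
    (outAB D i).Nonempty := by
  have hik : ¬ D (ofA i) (ofC k) := fun h => (arc_ofA_ofC_iff hD).1 h hi
  obtain ⟨w, hiw, hwk⟩ := (h2 (ofA i) (ofC k) ofA_ne_ofC).resolve_left hik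
  rcases KtriVert.cases w with ⟨i', rfl⟩ | ⟨j, rfl⟩ | ⟨k', rfl⟩
  · exact (fst_ne_of_arc hD hiw rfl).elim
  · exact ⟨j, mem_outAB.2 hiw⟩
  · exact (fst_ne_of_arc hD hwk rfl).elim

lemma compl_outAB_nonempty_of_notMem_outCA (hD : IsOrientation (Ktri a p q) D)
    (h2 : ReachesInTwo D) {i : Fin a} {k : Fin q} (hi : i ∉ outCA D k) :
    (outAB D i)ᶜ.Nonempty := by
  obtain ⟨w, hkw, hwi⟩ :=
    (h2 (ofC k) (ofA i) ofA_ne_ofC.symm).resolve_left (mt mem_outCA.2 hi)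
  rcases KtriVert.cases w with ⟨i', rfl⟩ | ⟨j, rfl⟩ | ⟨k', rfl⟩
  · exact (fst_ne_of_arc hD hwi rfl).elim
  · exact ⟨j, mem_compl.2 ((arc_ofB_ofA_iff hD).1 hwi)⟩
  · exact (fst_ne_of_arc hD hkw rfl).elim

lemma inf_compl_outAB_subset_outCB (hD : IsOrientation (Ktri a p q) D) (h2 : ReachesInTwo D)
    (k : Fin q) :
    (outCA D k).inf (fun i => (outAB D i)ᶜ) ⊆ outCB D k := by
  intro j hj
  by_contra hjk
  obtain ⟨w, hkw, hwj⟩ :=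
    (h2 (ofC k) (ofB j) ofB_ne_ofC.symm).resolve_left (mt mem_outCB.2 hjk)
  rcases KtriVert.cases w with ⟨i, rfl⟩ | ⟨j', rfl⟩ | ⟨k', rfl⟩
  · exact mem_compl.1 (mem_inf.1 hj i (mem_outCA.2 hkw)) (mem_outAB.2 hwj)
  · exact fst_ne_of_arc hD hwj rfl
  · exact fst_ne_of_arc hD hkw rfl

lemma outCB_subset_sup_compl_outAB (hD : IsOrientation (Ktri a p q) D) (h2 : ReachesInTwo D)
    (k : Fin q) :
    outCB D k ⊆ (outCA D k)ᶜ.sup (fun i => (outAB D i)ᶜ) := by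
  intro j hj
  have hjk : ¬ D (ofB j) (ofC k) := fun h => (arc_ofB_ofC_iff hD).1 h hj
  obtain ⟨w, hjw, hwk⟩ := (h2 (ofB j) (ofC k) ofB_ne_ofC).resolve_left hjk
  rcases KtriVert.cases w with ⟨i, rfl⟩ | ⟨j', rfl⟩ | ⟨k', rfl⟩
  · exact mem_sup.2 ⟨i, mem_compl.2 ((arc_ofA_ofC_iff hD).1 hwk),
      mem_compl.2 ((arc_ofB_ofA_iff hD).1 hjw)⟩
  · exact (fst_ne_of_arc hD hjw rfl).elim
  · exact (fst_ne_of_arc hD hwk rfl).elim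

lemma exists_notMem_and_mem_outAB_or_outCB (hD : IsOrientation (Ktri a p q) D)
    (h2 : ReachesInTwo D) {j j' : Fin p} (hjj' : j ≠ j') :
    (∃ i, j ∉ outAB D i ∧ j' ∈ outAB D i) ∨ ∃ k, j ∉ outCB D k ∧ j' ∈ outCB D k := by
  obtain hd | ⟨w, hjw, hwj'⟩ := h2 (ofB j) (ofB j') (ofB_injective.ne hjj')
  · exact (fst_ne_of_arc hD hd rfl).elim
  rcases KtriVert.cases w with ⟨i, rfl⟩ | ⟨j'', rfl⟩ | ⟨k, rfl⟩
  · exact Or.inl ⟨i, (arc_ofB_ofA_iff hD).1 hjw, mem_outAB.2 hwj'⟩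
  · exact (fst_ne_of_arc hD hjw rfl).elim
  · exact Or.inr ⟨k, (arc_ofB_ofC_iff hD).1 hjw, mem_outCB.2 hwj'⟩

lemma card_filter_outCA_eq_le (hD : IsOrientation (Ktri a p q) D) (h2 : ReachesInTwo D)
    (E : Finset (Fin a)) :
    #{k | outCA D k = E} ≤
      (#(Eᶜ.sup (fun i => (outAB D i)ᶜ) \ E.inf (fun i => (outAB D i)ᶜ))).choose
        (#(Eᶜ.sup (fun i => (outAB D i)ᶜ) \ E.inf (fun i => (outAB D i)ᶜ)) / 2) := by
  set F : Finset (Fin q) := {k | outCA D k = E}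
  have hanti : ∀ k ∈ F, ∀ k' ∈ F, k ≠ k' → ¬ outCB D k ⊆ outCB D k' := by
    intro k hk k' hk' hne
    simp only [F, mem_filter_univ] at hk hk'
    exact not_outCB_subset_of_outCA_eq hD h2 hne (hk.trans hk'.symm)
  have hinj : Set.InjOn (outCB D) F := fun k hk k' hk' h =>
    by_contra fun hne => hanti k hk k' hk' hne h.le
  rw [← card_image_of_injOn hinj]
  apply IsAntichain.card_le_of_subset_Icc
  · rw [coe_image]
    rintro _ ⟨k, hk, rfl⟩ _ ⟨k', hk', rfl⟩ hne
    exact hanti k hk k' hk' (fun h => hne (h ▸ rfl))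
  · intro s hs
    obtain ⟨k, hk, rfl⟩ := mem_image.1 hs
    rw [mem_Icc, ← (mem_filter_univ _).1 hk]
    exact ⟨inf_compl_outAB_subset_outCB hD h2 k, outCB_subset_sup_compl_outAB hD h2 k⟩

lemma card_le_two_of_forall_outAB_eq (hD : IsOrientation (Ktri a p q) D) (h2 : ReachesInTwo D)
    {O : Finset (Fin p)} (hO : ∀ i, outAB D i = O) : p ≤ 2 := by
  have hsep : ∀ j j' : Fin p, j ≠ j' → (j ∈ O ↔ j' ∉ O) := by
    intro j j' hjj'
    rcases exists_notMem_and_mem_outAB_or_outCB hD h2 hjj' with ⟨i, hj, hj'⟩ | ⟨k, hj, hj'⟩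
    · rw [hO] at hj hj'
      tauto
    · have hjO : j ∈ O := by
        by_contra hjO
        exact hj (inf_compl_outAB_subset_outCB hD h2 k
          (mem_inf.2 fun i _ => hO i ▸ mem_compl.2 hjO))
      obtain ⟨i, -, hi⟩ := mem_sup.1 (outCB_subset_sup_compl_outAB hD h2 k hj')
      rw [hO] at hi
      exact iff_of_true hjO (mem_compl.1 hi)
  by_contra! hp
  have h01 := hsep ⟨0, by omega⟩ ⟨1, by omega⟩ (by simp)
  have h12 := hsep ⟨1, by omega⟩ ⟨2, by omega⟩ (by simp)
  have h02 := hsep ⟨0, by omega⟩ ⟨2, by omega⟩ (by simp)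
  tauto

lemma card_filter_outCA_eq_empty_le_one (hD : IsOrientation (Ktri a p q) D)
    (h2 : ReachesInTwo D) : #{k | outCA D k = ∅} ≤ 1 := by
  have := card_filter_outCA_eq_le hD h2 ∅
  rw [inf_empty, top_eq_univ, sdiff_eq_empty_iff_subset.2 (subset_univ _)] at this
  simpa using this

lemma card_filter_outCA_eq_univ_le_one (hD : IsOrientation (Ktri a p q) D)
    (h2 : ReachesInTwo D) : #{k | outCA D k = univ} ≤ 1 := by
  simpa using card_filter_outCA_eq_le hD h2 univ

lemma card_filter_outCA_eq_empty_le_card_compl (hD : IsOrientation (Ktri a p q) D)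
    (h2 : ReachesInTwo D) (i : Fin a) : #{k | outCA D k = ∅} ≤ #(outAB D i)ᶜ := by
  obtain hempty | ⟨k, hk⟩ := (filter (fun k => outCA D k = ∅) univ).eq_empty_or_nonempty
  · simp [hempty]
  · have hi : i ∉ outCA D k := by simp [(mem_filter_univ k).1 hk]
    have := card_pos.2 (compl_outAB_nonempty_of_notMem_outCA hD h2 hi)
    have := card_filter_outCA_eq_empty_le_one hD h2
    omega

lemma card_filter_outCA_eq_univ_le_card (hD : IsOrientation (Ktri a p q) D)
    (h2 : ReachesInTwo D) (i : Fin a) : #{k | outCA D k = univ} ≤ #(outAB D i) := by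
  obtain hempty | ⟨k, hk⟩ := (filter (fun k => outCA D k = univ) univ).eq_empty_or_nonempty
  · simp [hempty]
  · have hi : i ∈ outCA D k := by simp [(mem_filter_univ k).1 hk]
    have := card_pos.2 (outAB_nonempty_of_mem_outCA hD h2 hi)
    have := card_filter_outCA_eq_univ_le_one hD h2
    omega

end Orientation

lemma Finset.compl_singleton_fin_two {i i' : Fin 2} (h : i ≠ i') :
    ({i}ᶜ : Finset (Fin 2)) = {i'} := by
  revert i i'
  decide

lemma Finset.eq_empty_or_singleton_or_univ_fin_two {i i' : Fin 2} (h : i ≠ i')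
    (E : Finset (Fin 2)) : E = ∅ ∨ E = {i} ∨ E = {i'} ∨ E = univ := by
  revert i i' E
  decide

section TwoVertexPart

variable {p q : ℕ} {D : KtriVert 2 p q → KtriVert 2 p q → Prop}

lemma outAB_subset_of_outCA_eq_singleton (hD : IsOrientation (Ktri 2 p q) D)
    (h2 : ReachesInTwo D) {i i' : Fin 2} (hii' : i ≠ i') {k : Fin q} (hk : outCA D k = {i}) :
    outAB D i' ⊆ outAB D i := by
  have := (inf_compl_outAB_subset_outCB hD h2 k).trans (outCB_subset_sup_compl_outAB hD h2 k)
  rwa [hk, compl_singleton_fin_two hii', inf_singleton, sup_singleton, compl_subset_compl] at this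

lemma exists_forall_outCA_ne_singleton (hp : 3 ≤ p) (hD : IsOrientation (Ktri 2 p q) D)
    (h2 : ReachesInTwo D) : ∃ i i' : Fin 2, i ≠ i' ∧ ∀ k, outCA D k ≠ {i'} := by
  by_contra! h
  obtain ⟨k₀, hk₀⟩ := h 1 0 (by decide)
  obtain ⟨k₁, hk₁⟩ := h 0 1 (by decide)
  have heq : outAB D 0 = outAB D 1 :=
    (outAB_subset_of_outCA_eq_singleton hD h2 (by decide) hk₁).antisymm
      (outAB_subset_of_outCA_eq_singleton hD h2 (by decide) hk₀)
  have := card_le_two_of_forall_outAB_eq hD h2 (Fin.forall_fin_two.2 ⟨heq, rfl⟩)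
  omega

lemma le_card_filter_outCA_eq_add {i i' : Fin 2} (hii' : i ≠ i')
    (hi' : ∀ k, outCA D k ≠ {i'}) :
    q ≤ #{k | outCA D k = ∅} + #{k | outCA D k = {i}} + #{k | outCA D k = univ} := by
  calc q = #{k | outCA D k = ∅ ∨ outCA D k = {i} ∨ outCA D k = univ} := by
        rw [filter_true_of_mem fun k _ => ?_, card_fin]
        simpa [hi' k] using eq_empty_or_singleton_or_univ_fin_two hii' (outCA D k)
    _ ≤ _ := by
      rw [filter_or, filter_or, add_assoc]
      exact (card_union_le _ _).trans (by gcongr; exact card_union_le _ _)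

lemma card_le_choose_half_of_forall_outCA_ne (hp : 3 ≤ p) (hD : IsOrientation (Ktri 2 p q) D)
    (h2 : ReachesInTwo D) {i i' : Fin 2} (hii' : i ≠ i') (hi' : ∀ k, outCA D k ≠ {i'}) :
    q ≤ p.choose (p / 2) := by
  set n₀ := #{k | outCA D k = ∅}
  set n₁ := #{k | outCA D k = {i}}
  set n₂ := #{k | outCA D k = univ}
  have hq : q ≤ n₀ + n₁ + n₂ := le_card_filter_outCA_eq_add hii' hi'
  have hn₀ : n₀ ≤ 1 := card_filter_outCA_eq_empty_le_one hD h2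
  have hn₂ : n₂ ≤ 1 := card_filter_outCA_eq_univ_le_one hD h2
  have hn₀O : n₀ ≤ #(outAB D i)ᶜ := card_filter_outCA_eq_empty_le_card_compl hD h2 i
  have hn₂O : n₂ ≤ #(outAB D i') := card_filter_outCA_eq_univ_le_card hD h2 i'
  have h₁ : n₁ ≤ (#(outAB D i \ outAB D i')).choose (#(outAB D i \ outAB D i') / 2) := by
    have := card_filter_outCA_eq_le hD h2 {i}
    rwa [compl_singleton_fin_two hii', inf_singleton, sup_singleton, compl_sdiff_compl] at this
  obtain hn₁ | ⟨k, hk⟩ := (filter (fun k => outCA D k = {i}) univ).eq_empty_or_nonempty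
  · have := Nat.add_choose_half_le (m := 0) hp (t := n₀ + n₂) (by omega) (by omega)
    simp only [n₁, hn₁, card_empty] at hq
    norm_num at this
    omega
  · have hsub := outAB_subset_of_outCA_eq_singleton hD h2 hii' ((mem_filter_univ k).1 hk)
    have hm : #(outAB D i \ outAB D i') + (n₀ + n₂) ≤ p := by
      have hcompl : #(outAB D i) + #(outAB D i)ᶜ = p := by
        rw [card_add_card_compl, Fintype.card_fin]
      have hle := card_le_card hsub
      rw [card_sdiff_of_subset hsub]
      omega
    have := Nat.add_choose_half_le hp (by omega) hm
    omega

end TwoVertexPart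

theorem K2pq_diam_two_imp_general (p q : ℕ) (hp : 3 ≤ p)
    (h : ∃ D, IsOrientation (Ktri 2 p q) D ∧ IsStrong D ∧ ddiam _ D = 2) :
    q ≤ p.choose (p / 2) := by
  obtain ⟨D, hD, -, hdiam⟩ := h
  have h2 : ReachesInTwo D := reachesInTwo_of_ddiam_le hdiam.le
  obtain ⟨i, i', hii', hi'⟩ := exists_forall_outCA_ne_singleton hp hD h2
  exact card_le_choose_half_of_forall_outCA_ne hp hD h2 hii' hi'

/-- If `K(2,p,q)` (with `q ≥ p ≥ 3`) has a strong orientation of diameter 2,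
then `q ≤ C(p, ⌊p/2⌋)`. -/
theorem K2pq_diam_two_imp (p q : ℕ) (hp : 3 ≤ p) (hpq : p ≤ q)
    (h : ∃ D, IsOrientation (Ktri 2 p q) D ∧ IsStrong D ∧ ddiam _ D = 2) :
    q ≤ p.choose (p / 2) :=
  K2pq_diam_two_imp_general p q hp h
end

section
/- Let p = kd with integers k, d satisfying 1 < k, d < p, and let 0 ≤ i, j ≤ d. Then Φ(p,d,[i,j]) = Σ_{s=i}^{d} Σ_{t=j}^{d} (−1)^{(s−i)+(t−j)} · (2d)!/(s!·t!·(2d−s−t)!) · C((2d−(s+t))k, (d−t)k) · C(s,i) · C(t,j). -/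
/-!
For a tuple `x` with entries at most `k`, the conditions in `Φ(p,d,[i,j])` force `S` and `T` to be
the zero set `Z(x)` and the full set `K(x) = {r | x r = k}`, so `Φ` sums `∏ C(k, x_r)` over the
tuples with `|Z(x)| = i` and `|K(x)| = j`. Weighting each tuple instead by
`C(|Z(x)|, s) C(|K(x)|, t)` counts disjoint pairs `A ⊆ Z(x)`, `B ⊆ K(x)` of sizes `s`, `t`; for
fixed `A` and `B` the sum over `x` is the coefficient of `X^p` in `X^(tk) (1 + X)^((2d-s-t)k)`, so
these weighted sums are the multinomial coefficient times `C((2d-s-t)k, (d-t)k)`. Binomial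
inversion `∑_{s=i}^{d} (-1)^(s-i) C(s,i) C(m,s) = [m = i]` in both variables recovers `Φ`; stopping
at `d` loses nothing because `p = kd` forces `|Z(x)|, |K(x)| ≤ d`.
-/

open Finset

/-- `Φ*(p,d)` (for `p = k·d`): the sum over tuples `(x_1,…,x_{2d})` with `Σ x_i = p` and
`1 ≤ x_i ≤ k−1` of `Π C(k, x_i)`. -/
def PhiStar (k d p : ℕ) : ℕ :=
  ∑ x ∈ (Finset.Nat.antidiagonalTuple (2 * d) p).filter
      (fun x => ∀ i, 1 ≤ x i ∧ x i ≤ k - 1),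
    ∏ i, k.choose (x i)

/-- `Φ(p,d,[i,j])` (for `p = k·d`): sum over disjoint index sets `S, T` of sizes `i, j`
and tuples summing to `p` with `x_r = 0` on `S`, `x_r = k` on `T` and `1 ≤ x_r ≤ k−1`
otherwise, of `Π C(k, x_r)`. -/
def Phi (k d p i j : ℕ) : ℕ :=
  ∑ S ∈ (Finset.univ : Finset (Fin (2 * d))).powersetCard i,
    ∑ T ∈ ((Finset.univ : Finset (Fin (2 * d))) \ S).powersetCard j,
      ∑ x ∈ (Finset.Nat.antidiagonalTuple (2 * d) p).filter
          (fun x => (∀ r ∈ S, x r = 0) ∧ (∀ r ∈ T, x r = k) ∧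
            ∀ r, r ∉ S → r ∉ T → 1 ≤ x r ∧ x r ≤ k - 1),
        ∏ r, k.choose (x r)

section DisjointPairs

variable {α M : Type*} [Fintype α] [DecidableEq α] [AddCommMonoid M] {Z K : Finset α}

theorem sum_powersetCard_sdiff_ite_eq_and_eq (hZK : Disjoint Z K) (s t : ℕ) (c : M) :
    ∑ A ∈ powersetCard s univ, ∑ B ∈ powersetCard t (univ \ A),
        (if A = Z ∧ B = K then c else 0) = if #Z = s ∧ #K = t then c else 0 := by
  have hKZ : K ⊆ univ \ Z := subset_sdiff.mpr ⟨subset_univ K, hZK.symm⟩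
  simp only [ite_and, sum_ite_irrel, sum_const_zero, sum_ite_eq', mem_powersetCard, subset_univ,
    true_and, hKZ, if_true]

theorem sum_powersetCard_sdiff_ite_subset_and_subset (hZK : Disjoint Z K) (s t : ℕ) (c : M) :
    ∑ A ∈ powersetCard s univ, ∑ B ∈ powersetCard t (univ \ A),
        (if A ⊆ Z ∧ B ⊆ K then c else 0) = ((#Z).choose s * (#K).choose t) • c := by
  have hsub : ∀ {U V : Finset α} (m : ℕ), V ⊆ U →
      {W ∈ powersetCard m U | W ⊆ V} = powersetCard m V :=
    fun m hVU => by ext W; simp only [mem_filter, mem_powersetCard]; grind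
  have hB : ∀ A ∈ powersetCard s Z,
      ∑ B ∈ powersetCard t (univ \ A), (if B ⊆ K then c else 0) = (#K).choose t • c := by
    intro A hA
    have hKA : K ⊆ univ \ A := subset_sdiff.mpr
      ⟨subset_univ K, (hZK.mono_left (mem_powersetCard.mp hA).1).symm⟩
    rw [← sum_filter, hsub t hKA, sum_const, card_powersetCard]
  simp_rw [ite_and, sum_ite_irrel, sum_const_zero]
  rw [← sum_filter, hsub s (subset_univ Z), sum_congr rfl hB, sum_const, card_powersetCard,
    smul_smul]

end DisjointPairs

theorem sum_Icc_neg_one_pow_mul_choose_mul_choose {i m d : ℕ} (hm : m ≤ d) :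
    ∑ s ∈ Icc i d, (-1 : ℤ) ^ (s - i) * (s.choose i * m.choose s) = if m = i then 1 else 0 := by
  rcases lt_or_ge m i with hmi | him
  · rw [if_neg hmi.ne]
    refine sum_eq_zero fun s hs => ?_
    rw [Nat.choose_eq_zero_of_lt (hmi.trans_le (mem_Icc.mp hs).1)]
    simp
  have hvanish : ∀ l ∈ range (d + 1 - i), l ∉ range (m - i + 1) →
      (-1 : ℤ) ^ l * (m - i).choose l = 0 := fun l _ hl => by
    rw [Nat.choose_eq_zero_of_lt (by simpa using hl)]; simp
  calc ∑ s ∈ Icc i d, (-1 : ℤ) ^ (s - i) * (s.choose i * m.choose s)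
      = m.choose i * ∑ l ∈ range (d + 1 - i), (-1 : ℤ) ^ l * (m - i).choose l := by
        rw [← Ico_add_one_right_eq_Icc, sum_Ico_eq_sum_range, mul_sum]
        refine sum_congr rfl fun l _ => ?_
        rw [mul_comm (Nat.choose _ _ : ℤ), ← Nat.cast_mul, Nat.choose_mul (Nat.le_add_right i l)]
        push_cast
        rw [Nat.add_sub_cancel_left]
        ring
    _ = m.choose i * ∑ l ∈ range (m - i + 1), (-1 : ℤ) ^ l * (m - i).choose l := by
        rw [sum_subset (range_subset_range.mpr (by omega)) hvanish]
    _ = if m = i then 1 else 0 := by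
        rw [Int.alternating_sum_range_choose]
        by_cases h : m = i
        · simp [h]
        · rw [if_neg (by omega), if_neg h, mul_zero]

open scoped Nat in
theorem Nat.factorial_div_factorial_mul_factorial_mul_factorial {n s t : ℕ} (h : s + t ≤ n) :
    n ! / (s ! * t ! * (n - s - t)!) = n.choose s * (n - s).choose t := by
  refine Nat.div_eq_of_eq_mul_left (by positivity) ?_
  have hs : n.choose s * s ! * (n - s)! = n ! := Nat.choose_mul_factorial_mul_factorial (by omega)
  have ht : (n - s).choose t * t ! * (n - s - t)! = (n - s)! :=
    Nat.choose_mul_factorial_mul_factorial (by omega)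
  rw [← hs, ← ht]
  ring

section Tuples

variable {ι : Type*} [Fintype ι] {k : ℕ} {x : ι → ℕ}

theorem le_of_prod_choose_ne_zero (hx : ∏ r, k.choose (x r) ≠ 0) (r : ι) : x r ≤ k := by
  by_contra h
  exact hx (prod_eq_zero (mem_univ r) (Nat.choose_eq_zero_of_lt (not_le.mp h)))

theorem card_filter_eq_mul_le_sum (x : ι → ℕ) (v : ℕ) : #{r | x r = v} * v ≤ ∑ r, x r :=
  calc #{r | x r = v} * v = ∑ r ∈ {r | x r = v}, x r := by
        rw [sum_congr rfl fun r hr => (mem_filter.mp hr).2, sum_const, smul_eq_mul]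
    _ ≤ ∑ r, x r := sum_le_sum_of_subset (subset_univ _)

theorem sum_le_card_filter_ne_zero_mul (hx : ∀ r, x r ≤ k) : ∑ r, x r ≤ #{r | x r ≠ 0} * k :=
  calc ∑ r, x r = ∑ r ∈ {r | x r ≠ 0}, x r := (sum_filter_ne_zero _).symm
    _ ≤ #{r | x r ≠ 0} * k := sum_le_card_nsmul _ _ _ fun r _ => hx r

theorem card_filter_eq_zero_add_le_and_card_filter_eq_le {d : ℕ} (hk : 0 < k)
    (hsum : ∑ r, x r = k * d) (hx : ∀ r, x r ≤ k) :
    #{r | x r = 0} + d ≤ Fintype.card ι ∧ #{r | x r = k} ≤ d := by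
  have hzero : #{r | x r = 0} + #{r | x r ≠ 0} = Fintype.card ι := by
    rw [← card_univ]; exact card_filter_add_card_filter_not _
  have hne : d * k ≤ #{r | x r ≠ 0} * k :=
    (mul_comm d k ▸ hsum) ▸ sum_le_card_filter_ne_zero_mul hx
  have hfull : #{r | x r = k} * k ≤ d * k :=
    (mul_comm k d ▸ hsum) ▸ card_filter_eq_mul_le_sum x k
  have := Nat.le_of_mul_le_mul_right hne hk
  exact ⟨by omega, Nat.le_of_mul_le_mul_right hfull hk⟩

theorem disjoint_filter_eq_filter_eq {β : Type*} [DecidableEq β] (x : ι → β) {a b : β}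
    (h : a ≠ b) : Disjoint ({r | x r = a} : Finset ι) ({r | x r = b} : Finset ι) :=
  disjoint_filter.mpr fun _ _ ha hb => h (ha.symm.trans hb)

theorem zero_on_eq_on_else_between_iff (hk : 0 < k) (hx : ∀ r, x r ≤ k) {S T : Finset ι} :
    ((∀ r ∈ S, x r = 0) ∧ (∀ r ∈ T, x r = k) ∧ ∀ r, r ∉ S → r ∉ T → 1 ≤ x r ∧ x r ≤ k - 1) ↔
      S = ({r | x r = 0} : Finset ι) ∧ T = ({r | x r = k} : Finset ι) := by
  constructor
  · rintro ⟨hS, hT, hmid⟩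
    constructor <;> ext r <;> simp only [mem_filter, mem_univ, true_and] <;>
      by_cases r ∈ S <;> by_cases r ∈ T <;> grind
  · rintro ⟨rfl, rfl⟩
    simp only [mem_filter, mem_univ, true_and]
    grind

end Tuples

section Coefficients

open Polynomial

theorem Polynomial.coeff_prod_eq_sum_antidiagonalTuple {R : Type*} [CommSemiring R] {n : ℕ}
    (P : Fin n → R[X]) (p : ℕ) :
    (∏ r, P r).coeff p = ∑ x ∈ Nat.antidiagonalTuple n p, ∏ r, (P r).coeff (x r) := by
  rw [← coeff_coe, ← coeToPowerSeries.ringHom_apply, map_prod,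
    ← piAntidiag_univ_fin_eq_antidiagonalTuple]
  simp only [coeToPowerSeries.ringHom_apply, PowerSeries.coeff_prod, coeff_coe, finsuppAntidiag,
    sum_map]
  exact sum_attach (piAntidiag univ p) fun x => ∏ r, (P r).coeff (x r)

theorem sum_antidiagonalTuple_ite_prod_choose {n : ℕ} (k p : ℕ) {A B : Finset (Fin n)}
    (hAB : Disjoint A B) (hBp : #B * k ≤ p) :
    ∑ x ∈ Nat.antidiagonalTuple n p,
        (if (∀ r ∈ A, x r = 0) ∧ (∀ r ∈ B, x r = k) then ∏ r, k.choose (x r) else 0) =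
      ((n - #A - #B) * k).choose (p - #B * k) := by
  let P : Fin n → ℕ[X] := fun r => if r ∈ A then 1 else if r ∈ B then X ^ k else (1 + X) ^ k
  have hprod : ∏ r, P r = X ^ (#B * k) * (1 + X) ^ ((n - #A - #B) * k) := by
    have hB : ({r | r ∉ A ∧ r ∈ B} : Finset (Fin n)) = B := by
      ext r; simpa using fun hr hrA => disjoint_left.mp hAB hrA hr
    have hrest : #({r | r ∉ A ∧ r ∉ B} : Finset (Fin n)) = n - #A - #B := by
      have : ({r | r ∉ A ∧ r ∉ B} : Finset (Fin n)) = (A ∪ B)ᶜ := by ext; simp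
      rw [this, card_compl, Fintype.card_fin, card_union_of_disjoint hAB, Nat.sub_sub]
    simp only [P, prod_ite, prod_const_one, one_mul, filter_filter, prod_const, hB, ← pow_mul]
    rw [hrest, mul_comm k, mul_comm k]
  have hcoeff : ∀ x : Fin n → ℕ, ∏ r, (P r).coeff (x r) =
      if (∀ r ∈ A, x r = 0) ∧ (∀ r ∈ B, x r = k) then ∏ r, k.choose (x r) else 0 := by
    intro x
    split_ifs with hx
    · refine prod_congr rfl fun r _ => ?_
      by_cases hrA : r ∈ A
      · simp [P, hrA, hx.1 r hrA, coeff_one]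
      by_cases hrB : r ∈ B
      · simp [P, hrA, hrB, hx.2 r hrB, coeff_X_pow]
      · simp [P, hrA, hrB, coeff_one_add_X_pow]
    · simp only [not_and_or, not_forall] at hx
      obtain ⟨r, hrA, hr⟩ | ⟨r, hrB, hr⟩ := hx
      · exact prod_eq_zero (mem_univ r) (by simp [P, hrA, coeff_one, hr])
      · exact prod_eq_zero (mem_univ r)
          (by simp [P, disjoint_right.mp hAB hrB, hrB, coeff_X_pow, hr])
  simp_rw [← hcoeff, ← coeff_prod_eq_sum_antidiagonalTuple, hprod, coeff_X_pow_mul',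
    if_pos hBp, coeff_one_add_X_pow, Nat.cast_id]

end Coefficients

theorem sum_antidiagonalTuple_choose_card_mul_choose_card {n k : ℕ} (hk : k ≠ 0)
    (p s t : ℕ) (ht : t * k ≤ p) :
    ∑ x ∈ Nat.antidiagonalTuple n p,
        (#{r | x r = 0}).choose s * (#{r | x r = k}).choose t * ∏ r, k.choose (x r) =
      n.choose s * (n - s).choose t * ((n - s - t) * k).choose (p - t * k) := by
  have hpair : ∀ A ∈ powersetCard s univ, ∀ B ∈ powersetCard t (univ \ A),
      ∑ x ∈ Nat.antidiagonalTuple n p,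
        (if (∀ r ∈ A, x r = 0) ∧ (∀ r ∈ B, x r = k) then ∏ r, k.choose (x r) else 0) =
      ((n - s - t) * k).choose (p - t * k) := by
    intro A hA B hB
    obtain ⟨-, rfl⟩ := mem_powersetCard.mp hA
    obtain ⟨hBA, rfl⟩ := mem_powersetCard.mp hB
    exact sum_antidiagonalTuple_ite_prod_choose k p (subset_sdiff.mp hBA).2.symm ht
  calc ∑ x ∈ Nat.antidiagonalTuple n p,
        (#{r | x r = 0}).choose s * (#{r | x r = k}).choose t * ∏ r, k.choose (x r)
      = ∑ x ∈ Nat.antidiagonalTuple n p, ∑ A ∈ powersetCard s univ,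
          ∑ B ∈ powersetCard t (univ \ A),
            if A ⊆ ({r | x r = 0} : Finset (Fin n)) ∧ B ⊆ ({r | x r = k} : Finset (Fin n))
            then ∏ r, k.choose (x r) else 0 := by
        refine sum_congr rfl fun x _ => ?_
        rw [sum_powersetCard_sdiff_ite_subset_and_subset
          (disjoint_filter_eq_filter_eq x hk.symm), smul_eq_mul]
    _ = ∑ A ∈ powersetCard s univ, ∑ B ∈ powersetCard t (univ \ A),
          ∑ x ∈ Nat.antidiagonalTuple n p,
            (if (∀ r ∈ A, x r = 0) ∧ (∀ r ∈ B, x r = k) then ∏ r, k.choose (x r) else 0) := by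
        rw [sum_comm]
        refine sum_congr rfl fun A _ => ?_
        rw [sum_comm]
        simp only [subset_iff, mem_filter, mem_univ, true_and]
    _ = ∑ A ∈ powersetCard s univ, (n - s).choose t * ((n - s - t) * k).choose (p - t * k) := by
        refine sum_congr rfl fun A hA => ?_
        rw [sum_congr rfl (hpair A hA), sum_const, card_powersetCard,
          card_sdiff_of_subset (subset_univ A), card_univ, Fintype.card_fin,
          (mem_powersetCard.mp hA).2, smul_eq_mul]
    _ = n.choose s * (n - s).choose t * ((n - s - t) * k).choose (p - t * k) := by
        rw [sum_const, card_powersetCard, card_univ, Fintype.card_fin, smul_eq_mul, mul_assoc]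

theorem Phi_eq_sum_antidiagonalTuple {k : ℕ} (hk : 0 < k) (d p i j : ℕ) :
    Phi k d p i j = ∑ x ∈ Nat.antidiagonalTuple (2 * d) p,
      if #{r | x r = 0} = i ∧ #{r | x r = k} = j then ∏ r, k.choose (x r) else 0 := by
  rw [Phi]
  simp_rw [sum_filter]
  rw [sum_congr rfl fun S _ => sum_comm, sum_comm]
  refine sum_congr rfl fun x _ => ?_
  by_cases hw : ∏ r, k.choose (x r) = 0
  · simp [hw]
  simp_rw [zero_on_eq_on_else_between_iff hk (le_of_prod_choose_ne_zero hw)]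
  exact sum_powersetCard_sdiff_ite_eq_and_eq (disjoint_filter_eq_filter_eq x hk.ne) i j _

theorem ite_card_eq_sum_Icc_mul_sum_Icc {k d : ℕ} (hk : 0 < k) (i j : ℕ) {x : Fin (2 * d) → ℕ}
    (hx : x ∈ Nat.antidiagonalTuple (2 * d) (k * d)) :
    (((if #{r | x r = 0} = i ∧ #{r | x r = k} = j then ∏ r, k.choose (x r) else 0 : ℕ)) : ℤ) =
      (∑ s ∈ Icc i d, (-1 : ℤ) ^ (s - i) * (s.choose i * (#{r | x r = 0}).choose s)) *
        (∑ t ∈ Icc j d, (-1 : ℤ) ^ (t - j) * (t.choose j * (#{r | x r = k}).choose t)) *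
          ∏ r, k.choose (x r) := by
  by_cases hw : ∏ r, k.choose (x r) = 0
  · simp [hw]
  obtain ⟨hzero, hfull⟩ := card_filter_eq_zero_add_le_and_card_filter_eq_le hk
    (Nat.mem_antidiagonalTuple.mp hx) (le_of_prod_choose_ne_zero hw)
  rw [Fintype.card_fin] at hzero
  rw [sum_Icc_neg_one_pow_mul_choose_mul_choose (by omega),
    sum_Icc_neg_one_pow_mul_choose_mul_choose hfull]
  split_ifs <;> simp_all

theorem factorial_div_mul_choose_eq_sum_antidiagonalTuple {k d s t : ℕ} (hk : 0 < k)
    (hs : s ≤ d) (ht : t ≤ d) :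
    (2 * d).factorial / (s.factorial * t.factorial * (2 * d - s - t).factorial) *
        ((2 * d - (s + t)) * k).choose ((d - t) * k) =
      ∑ x ∈ Nat.antidiagonalTuple (2 * d) (k * d),
        (#{r | x r = 0}).choose s * (#{r | x r = k}).choose t * ∏ r, k.choose (x r) := by
  rw [sum_antidiagonalTuple_choose_card_mul_choose_card hk.ne' _ s t
      (mul_comm d k ▸ Nat.mul_le_mul_right k ht),
    Nat.factorial_div_factorial_mul_factorial_mul_factorial (by omega), Nat.sub_add_eq,
    mul_comm k d, ← Nat.sub_mul]

theorem Phi_eq_general (k d p i j : ℕ) (hp : p = k * d) (hk : 1 < k) :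
    (Phi k d p i j : ℤ) =
      ∑ s ∈ Finset.Icc i d, ∑ t ∈ Finset.Icc j d,
        (-1 : ℤ) ^ ((s - i) + (t - j)) *
          ((2 * d).factorial / (s.factorial * t.factorial * (2 * d - s - t).factorial) : ℕ) *
          ((2 * d - (s + t)) * k).choose ((d - t) * k) * s.choose i * t.choose j := by
  subst hp
  have hk0 : 0 < k := zero_lt_one.trans hk
  rw [Phi_eq_sum_antidiagonalTuple hk0, Nat.cast_sum,
    sum_congr rfl fun x hx => ite_card_eq_sum_Icc_mul_sum_Icc hk0 i j hx]
  simp_rw [sum_mul_sum, sum_mul]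
  rw [sum_comm]
  refine sum_congr rfl fun s hs => ?_
  rw [sum_comm]
  refine sum_congr rfl fun t ht => ?_
  rw [show ∀ a b c e : ℤ, (-1) ^ (s - i + (t - j)) * a * b * c * e =
      (-1) ^ (s - i) * c * ((-1) ^ (t - j) * e) * (a * b) from fun a b c e => by ring,
    ← Nat.cast_mul, factorial_div_mul_choose_eq_sum_antidiagonalTuple hk0 (mem_Icc.mp hs).2
      (mem_Icc.mp ht).2, Nat.cast_sum, mul_sum]
  refine sum_congr rfl fun x _ => ?_
  push_cast
  ring

/-- The inclusion–exclusion formula for `Φ(p,d,[i,j])`. -/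
theorem Phi_eq (k d p i j : ℕ) (hp : p = k * d) (hk : 1 < k) (hkp : k < p)
    (hd : 1 < d) (hdp : d < p) (hi : i ≤ d) (hj : j ≤ d) :
    (Phi k d p i j : ℤ) =
      ∑ s ∈ Finset.Icc i d, ∑ t ∈ Finset.Icc j d,
        (-1 : ℤ) ^ ((s - i) + (t - j)) *
          ((2 * d).factorial / (s.factorial * t.factorial * (2 * d - s - t).factorial) : ℕ) *
          ((2 * d - (s + t)) * k).choose ((d - t) * k) * s.choose i * t.choose j :=
  Phi_eq_general k d p i j hp hk
end

section
/- Let p = kd with integers k, d satisfying 1 < k, d < p. Then Φ*(p,d) = Σ_{s=0}^{d} Σ_{t=0}^{d} (−1)^{s+t} · (2d)!/(s!·t!·(2d−s−t)!) · C((2d−(s+t))k, (d−t)k). -/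
/-!
`Φ*(p,d)` is the coefficient of `X^p` in `P^(2d)`, where `P = (1+X)^k - 1 - X^k` keeps exactly the
binomial terms `C(k,x) X^x` with `0 < x < k`. Expanding `P^(2d) = (-X^k + (-1) + (1+X)^k)^(2d)`, the
terms with `t` factors `-X^k` and `s` factors `-1` contribute `(-1)^(s+t)` times a multinomial
coefficient times `C(k(2d-s-t), p - kt)`; for `p = kd` this vanishes unless `s, t ≤ d`.
-/

open Finset

open Polynomial

theorem Polynomial.coeff_pow_eq_sum_antidiagonalTuple {R : Type*} [CommSemiring R] (Q : R[X])
    (n p : ℕ) :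
    (Q ^ n).coeff p = ∑ x ∈ Finset.Nat.antidiagonalTuple n p, ∏ i, Q.coeff (x i) := by
  induction n generalizing p with
  | zero => cases p <;> simp [Finset.Nat.antidiagonalTuple_zero_succ, coeff_one]
  | succ n ih =>
    rw [pow_succ', coeff_mul]
    simp_rw [ih, mul_sum]
    rw [sum_sigma']
    refine sum_bij' (fun y _ => Fin.cons y.1.1 y.2)
      (fun x _ => ⟨(x 0, ∑ i : Fin n, x i.succ), Fin.tail x⟩) ?_ ?_ ?_ ?_ ?_
    · rintro ⟨⟨a, b⟩, y⟩ hy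
      simp only [mem_sigma, HasAntidiagonal.mem_antidiagonal, Nat.mem_antidiagonalTuple] at hy ⊢
      rw [Fin.sum_cons, hy.2, hy.1]
    · intro x hx
      simp only [mem_sigma, HasAntidiagonal.mem_antidiagonal, Nat.mem_antidiagonalTuple] at hx ⊢
      exact ⟨by rw [← hx, Fin.sum_univ_succ], rfl⟩
    · rintro ⟨⟨a, b⟩, y⟩ hy
      simp only [mem_sigma, HasAntidiagonal.mem_antidiagonal, Nat.mem_antidiagonalTuple] at hy
      simp [hy.2]
    · intro x _
      simp
    · rintro ⟨⟨a, b⟩, y⟩ _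
      simp [Fin.prod_univ_succ]

theorem Nat.factorial_div_eq_choose_mul_choose {n s t : ℕ} (h : s + t ≤ n) :
    n.factorial / (s.factorial * t.factorial * (n - s - t).factorial) =
      n.choose t * (n - t).choose s := by
  refine Nat.div_eq_of_eq_mul_left (by positivity) ?_
  calc n.factorial
      = n.choose t * ((n - t).choose s * s.factorial * (n - t - s).factorial) * t.factorial := by
        rw [Nat.choose_mul_factorial_mul_factorial (by omega), mul_right_comm,
          Nat.choose_mul_factorial_mul_factorial (by omega)]
    _ = _ := by rw [Nat.sub_right_comm]; ring

noncomputable def binomialInterior (R : Type*) [CommRing R] (k : ℕ) : R[X] :=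
  (1 + X) ^ k - 1 - X ^ k

section

variable {R : Type*} [CommRing R]

theorem coeff_binomialInterior {k : ℕ} (hk : 0 < k) (n : ℕ) :
    (binomialInterior R k).coeff n = if 0 < n ∧ n < k then (k.choose n : R) else 0 := by
  rw [binomialInterior, coeff_sub, coeff_sub, coeff_one_add_X_pow, coeff_one, coeff_X_pow]
  rcases Nat.lt_trichotomy n k with h | rfl | h
  · rcases n.eq_zero_or_pos with rfl | hn
    · simp [hk.ne]
    · simp [hn, h, hn.ne', h.ne]
  · simp [hk, hk.ne']
  · simp [Nat.choose_eq_zero_of_lt h, h.ne', h.not_gt, (hk.trans h).ne']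

theorem binomialInterior_pow (k m : ℕ) :
    binomialInterior R k ^ m =
      ∑ t ∈ range (m + 1), ∑ s ∈ range (m - t + 1),
        C ((-1) ^ (s + t) * (m.choose t * (m - t).choose s : R)) *
          (X ^ (k * t) * (1 + X) ^ (k * (m - t - s))) := by
  rw [binomialInterior, show (1 + X : R[X]) ^ k - 1 - X ^ k = -X ^ k + (-1 + (1 + X) ^ k) by ring,
    add_pow]
  refine sum_congr rfl fun t _ => ?_
  rw [add_pow, mul_sum, sum_mul]
  refine sum_congr rfl fun s _ => ?_
  simp only [map_mul, map_pow, map_neg, map_one, map_natCast, ← pow_mul]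
  ring

theorem coeff_binomialInterior_pow (k m n : ℕ) :
    (binomialInterior R k ^ m).coeff n =
      ∑ t ∈ range (m + 1), ∑ s ∈ range (m - t + 1),
        (-1) ^ (s + t) * (m.choose t * (m - t).choose s : R) *
          if k * t ≤ n then ((k * (m - t - s)).choose (n - k * t) : R) else 0 := by
  simp only [binomialInterior_pow, finsetSum_coeff, coeff_C_mul, coeff_X_pow_mul',
    coeff_one_add_X_pow]

theorem coeff_binomialInterior_pow_mul {k : ℕ} (hk : 0 < k) {j m : ℕ} (hjm : j ≤ m) :
    (binomialInterior R k ^ m).coeff (k * j) =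
      ∑ t ∈ range (j + 1), ∑ s ∈ range (m - j + 1),
        (-1) ^ (s + t) * (m.choose t * (m - t).choose s : R) *
          ((k * (m - t - s)).choose (k * (j - t)) : R) := by
  rw [coeff_binomialInterior_pow,
    ← sum_subset (range_subset_range.2 (by omega : j + 1 ≤ m + 1))]
  · refine sum_congr rfl fun t ht => ?_
    rw [mem_range] at ht
    simp only [if_pos (Nat.mul_le_mul_left k (by omega : t ≤ j)), ← Nat.mul_sub]
    refine (sum_subset (range_subset_range.2 (by omega)) fun s hs hsj => ?_).symm
    rw [mem_range] at hs hsj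
    rw [Nat.choose_eq_zero_of_lt (Nat.mul_lt_mul_left hk |>.2 (by omega : m - t - s < j - t)),
      Nat.cast_zero, mul_zero]
  · intro t _ ht
    rw [mem_range, not_lt] at ht
    exact sum_eq_zero fun s _ => by
      rw [if_neg (Nat.mul_lt_mul_left hk |>.2 ht).not_ge, mul_zero]

end

theorem phiStar_eq_coeff_binomialInterior_pow {k : ℕ} (hk : 0 < k) (d p : ℕ) :
    (PhiStar k d p : ℤ) = (binomialInterior ℤ k ^ (2 * d)).coeff p := by
  rw [coeff_pow_eq_sum_antidiagonalTuple, PhiStar, Nat.cast_sum, sum_filter]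
  refine sum_congr rfl fun x _ => ?_
  simp only [coeff_binomialInterior hk]
  split_ifs with h
  · push_cast
    exact prod_congr rfl fun i _ => by rw [if_pos (by have := h i; omega)]
  · push Not at h
    obtain ⟨i, hi⟩ := h
    exact (prod_eq_zero (mem_univ i) (if_neg (by omega))).symm

theorem PhiStar_eq_general (k d p : ℕ) (hp : p = k * d) (hk : 1 < k) :
    (PhiStar k d p : ℤ) =
      ∑ s ∈ Finset.range (d + 1), ∑ t ∈ Finset.range (d + 1),
        (-1 : ℤ) ^ (s + t) *
          ((2 * d).factorial / (s.factorial * t.factorial * (2 * d - s - t).factorial) : ℕ) *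
          ((2 * d - (s + t)) * k).choose ((d - t) * k) := by
  have hk0 : 0 < k := by omega
  rw [phiStar_eq_coeff_binomialInterior_pow hk0, hp,
    coeff_binomialInterior_pow_mul hk0 (by omega : d ≤ 2 * d),
    show 2 * d - d = d by omega, sum_comm]
  refine sum_congr rfl fun s hs => sum_congr rfl fun t ht => ?_
  rw [mem_range] at hs ht
  rw [Nat.factorial_div_eq_choose_mul_choose (by omega), Nat.sub_sub, mul_comm k, mul_comm k,
    add_comm t]
  push_cast
  ring

/-- The inclusion–exclusion formula for `Φ*(p,d)`. -/
theorem PhiStar_eq (k d p : ℕ) (hp : p = k * d) (hk : 1 < k) (hkp : k < p)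
    (hd : 1 < d) (hdp : d < p) :
    (PhiStar k d p : ℤ) =
      ∑ s ∈ Finset.range (d + 1), ∑ t ∈ Finset.range (d + 1),
        (-1 : ℤ) ^ (s + t) *
          ((2 * d).factorial / (s.factorial * t.factorial * (2 * d - s - t).factorial) : ℕ) *
          ((2 * d - (s + t)) * k).choose ((d - t) * k) :=
  PhiStar_eq_general k d p hp hk
end

section
/- Let p = kd with integers k, d satisfying 1 < k, d < p. Then for all 0 ≤ i, j ≤ d, Φ(p,d,[i,j]) = Φ(p,d,[j,i]). -/
/-!
The reflection `x ↦ (k - x_r)_r` maps the tuples counted with zeros on `S` and `k`'s on `T`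
bijectively onto those with zeros on `T` and `k`'s on `S`: it keeps the entries in `[1, k - 1]`
there, preserves the total because `2d · k = 2p`, and preserves `Π C(k, x_r)` by
`C(k, x) = C(k, k - x)`. Swapping the roles of `S` and `T` in the outer double sum then finishes.
-/

open Finset

section PowersetCardSdiff

variable {α M : Type*} [Fintype α] [DecidableEq α] [AddCommMonoid M]

theorem sum_powersetCard_sdiff_comm (i j : ℕ) (f : Finset α → Finset α → M) :
    ∑ S ∈ (univ : Finset α).powersetCard i, ∑ T ∈ (univ \ S).powersetCard j, f S T =
      ∑ T ∈ (univ : Finset α).powersetCard j, ∑ S ∈ (univ \ T).powersetCard i, f S T := by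
  refine sum_comm' fun S T => ?_
  simp only [mem_powersetCard, subset_sdiff, subset_univ, true_and, disjoint_comm (a := S)]
  tauto

end PowersetCardSdiff

def phiTuples (n k p : ℕ) (S T : Finset (Fin n)) : Finset (Fin n → ℕ) :=
  (Nat.antidiagonalTuple n p).filter fun x => (∀ r ∈ S, x r = 0) ∧ (∀ r ∈ T, x r = k) ∧
    ∀ r, r ∉ S → r ∉ T → 1 ≤ x r ∧ x r ≤ k - 1

section PhiTuples

variable {n k p : ℕ} {S T : Finset (Fin n)} {x : Fin n → ℕ}

theorem le_of_mem_phiTuples (hx : x ∈ phiTuples n k p S T) (r : Fin n) : x r ≤ k := by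
  obtain ⟨-, hS, hT, hrest⟩ := mem_filter.mp hx
  by_cases hrS : r ∈ S
  · simp [hS r hrS]
  by_cases hrT : r ∈ T
  · simp [hT r hrT]
  · exact (hrest r hrS hrT).2.trans (Nat.sub_le k 1)

theorem reflect_mem_phiTuples (hnk : n * k = p + p) (hx : x ∈ phiTuples n k p S T) :
    (fun r => k - x r) ∈ phiTuples n k p T S := by
  have hle := le_of_mem_phiTuples hx
  obtain ⟨hsum, hS, hT, hrest⟩ := mem_filter.mp hx
  rw [Nat.mem_antidiagonalTuple] at hsum
  refine mem_filter.mpr ⟨?_, fun r hr => by simp [hT r hr], fun r hr => by simp [hS r hr],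
    fun r hrT hrS => by have := hrest r hrS hrT; dsimp only; omega⟩
  have hreflect : ∑ r, (k - x r) = n * k - p := by
    rw [sum_tsub_distrib _ fun r _ => hle r, hsum, sum_const, card_univ, Fintype.card_fin,
      smul_eq_mul]
  rw [Nat.mem_antidiagonalTuple, hreflect]
  omega

theorem sum_phiTuples_comm (hnk : n * k = p + p) :
    ∑ x ∈ phiTuples n k p S T, ∏ r, k.choose (x r) =
      ∑ x ∈ phiTuples n k p T S, ∏ r, k.choose (x r) := by
  refine sum_nbij' (fun x r => k - x r) (fun x r => k - x r)
    (fun x hx => reflect_mem_phiTuples hnk hx) (fun x hx => reflect_mem_phiTuples hnk hx)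
    (fun x hx => funext fun r => Nat.sub_sub_self (le_of_mem_phiTuples hx r))
    (fun x hx => funext fun r => Nat.sub_sub_self (le_of_mem_phiTuples hx r)) fun x hx => ?_
  exact prod_congr rfl fun r _ => (Nat.choose_symm (le_of_mem_phiTuples hx r)).symm

end PhiTuples

theorem Phi_symm_general (k d p i j : ℕ) (hp : p = k * d) :
    Phi k d p i j = Phi k d p j i := by
  have hnk : 2 * d * k = p + p := by subst hp; ring
  change ∑ S ∈ _, ∑ T ∈ _, ∑ x ∈ phiTuples (2 * d) k p S T, _ =
    ∑ S ∈ _, ∑ T ∈ _, ∑ x ∈ phiTuples (2 * d) k p S T, _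
  rw [sum_powersetCard_sdiff_comm i j]
  exact sum_congr rfl fun T _ => sum_congr rfl fun S _ => sum_phiTuples_comm hnk

/-- Symmetry: `Φ(p,d,[i,j]) = Φ(p,d,[j,i])`. -/
theorem Phi_symm (k d p i j : ℕ) (hp : p = k * d) (hk : 1 < k) (hkp : k < p)
    (hd : 1 < d) (hdp : d < p) (hi : i ≤ d) (hj : j ≤ d) :
    Phi k d p i j = Phi k d p j i :=
  Phi_symm_general k d p i j hp
end

section
/- Let p = kd with integers k, d satisfying 1 < k, d < p. Then C(2p,p) = Σ_{i=0}^{d} Σ_{j=0}^{d} Φ(p,d,[i,j]). -/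
open Finset

/-!
By Vandermonde's identity, `C(2p, p) = C(2d·k, p)` is the sum of `∏ C(k, x_r)` over all
`2d`-tuples `x` summing to `p`, and only tuples with every `x_r ≤ k` contribute. Such a tuple
is counted in exactly one `Φ(p,d,[i,j])`: `S` has to be its zero set and `T` the set where
`x_r = k`. Since `∑ x_r = d·k` and `x_r ≤ k`, each of these two sets has at most `d` elements.
-/

theorem Finset.sum_piAntidiag_prod_choose {ι : Type*} [DecidableEq ι] (s : Finset ι)
    (a : ι → ℕ) (n : ℕ) :
    ∑ f ∈ s.piAntidiag n, ∏ i ∈ s, (a i).choose (f i) = (∑ i ∈ s, a i).choose n := by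
  induction s using Finset.cons_induction generalizing n with
  | empty => cases n <;> simp
  | cons i s hi ih =>
    rw [piAntidiag_cons, sum_disjiUnion, sum_cons, Nat.add_choose_eq]
    refine sum_congr rfl fun p _ => ?_
    rw [sum_map, ← ih, mul_sum]
    refine sum_congr rfl fun f hf => ?_
    have hfi : f i = 0 := by
      by_contra h
      exact hi ((mem_piAntidiag.mp hf).2 i h)
    rw [prod_cons]
    congr 1
    · simp [hfi]
    · refine prod_congr rfl fun j hj => ?_
      simp [ne_of_mem_of_not_mem hj hi]

theorem Finset.Nat.sum_antidiagonalTuple_prod_choose (k n m : ℕ) :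
    ∑ x ∈ Nat.antidiagonalTuple n m, ∏ i, k.choose (x i) = (n * k).choose m := by
  simpa [← piAntidiag_univ_fin_eq_antidiagonalTuple] using
    sum_piAntidiag_prod_choose univ (fun _ : Fin n => k) m

section LevelSet

variable {ι : Type*} [Fintype ι]

def levelSet (x : ι → ℕ) (a : ℕ) : Finset ι := {r | x r = a}

@[simp] theorem mem_levelSet {x : ι → ℕ} {a : ℕ} {r : ι} : r ∈ levelSet x a ↔ x r = a := by
  simp [levelSet]

theorem disjoint_levelSet {x : ι → ℕ} {a b : ℕ} (hab : a ≠ b) :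
    Disjoint (levelSet x a) (levelSet x b) :=
  disjoint_left.mpr fun _ ha hb => hab ((mem_levelSet.mp ha).symm.trans (mem_levelSet.mp hb))

theorem card_levelSet_le_of_sum_eq {x : ι → ℕ} {k d : ℕ} (hk : 0 < k)
    (hx : ∑ r, x r = d * k) : #(levelSet x k) ≤ d := by
  refine Nat.le_of_mul_le_mul_right ?_ hk
  calc #(levelSet x k) * k = ∑ r ∈ levelSet x k, x r := by
        rw [sum_congr rfl fun r hr => mem_levelSet.mp hr, sum_const, smul_eq_mul]
    _ ≤ ∑ r, x r := sum_le_sum_of_subset (subset_univ _)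
    _ = d * k := hx

theorem card_levelSet_zero_le_of_sum_eq [DecidableEq ι] {x : ι → ℕ} {k d : ℕ} (hk : 0 < k)
    (hle : ∀ r, x r ≤ k) (hx : ∑ r, x r = d * k) :
    #(levelSet x 0) ≤ Fintype.card ι - d := by
  have hcompl : d ≤ #(levelSet x 0)ᶜ := by
    refine Nat.le_of_mul_le_mul_right ?_ hk
    calc d * k = ∑ r ∈ (levelSet x 0)ᶜ, x r :=
          hx ▸ (sum_subset (subset_univ _) fun r _ hr => by simpa using hr).symm
      _ ≤ #(levelSet x 0)ᶜ * k := by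
          simpa using sum_le_sum fun r (_ : r ∈ (levelSet x 0)ᶜ) => hle r
  rw [card_compl] at hcompl
  have := card_le_univ (levelSet x 0)
  omega

theorem phi_condition_iff_levelSet_eq {x : ι → ℕ} {k : ℕ} (hk : k ≠ 0) {S T : Finset ι} :
    ((∀ r ∈ S, x r = 0) ∧ (∀ r ∈ T, x r = k) ∧ ∀ r, r ∉ S → r ∉ T → 1 ≤ x r ∧ x r ≤ k - 1) ↔
      (∀ r, x r ≤ k) ∧ levelSet x 0 = S ∧ levelSet x k = T := by
  constructor
  · rintro ⟨hS, hT, hmid⟩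
    refine ⟨fun r => ?_, ?_, ?_⟩
    · by_cases hrS : r ∈ S
      · simp [hS r hrS]
      by_cases hrT : r ∈ T
      · simp [hT r hrT]
      exact (hmid r hrS hrT).2.trans (Nat.sub_le k 1)
    · ext r; simp only [mem_levelSet]; grind
    · ext r; simp only [mem_levelSet]; grind
  · rintro ⟨hle, rfl, rfl⟩
    simp only [mem_levelSet]
    grind

end LevelSet

theorem Phi_eq_sum_filter_card_levelSet {k : ℕ} (hk : k ≠ 0) (d p i j : ℕ) :
    Phi k d p i j =
      ∑ x ∈ {x ∈ Nat.antidiagonalTuple (2 * d) p | ∀ r, x r ≤ k} with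
          (#(levelSet x 0), #(levelSet x k)) = (i, j),
        ∏ r, k.choose (x r) := by
  unfold Phi
  simp_rw [phi_condition_iff_levelSet_eq hk]
  rw [← sum_fiberwise_of_maps_to (g := (levelSet · 0)) (t := univ.powersetCard i)]
  · refine sum_congr rfl fun S _ => ?_
    rw [← sum_fiberwise_of_maps_to (g := (levelSet · k)) (t := (univ \ S).powersetCard j)]
    · refine sum_congr rfl fun T _ => sum_congr ?_ fun _ _ => rfl
      ext x
      simp only [mem_filter, Prod.mk.injEq]
      grind
    · intro x hx
      simp only [mem_filter, Prod.mk.injEq] at hx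
      rw [mem_powersetCard, ← hx.2, subset_sdiff]
      exact ⟨⟨subset_univ _, disjoint_levelSet hk⟩, hx.1.2.2⟩
  · intro x hx
    simp only [mem_filter, Prod.mk.injEq] at hx
    exact mem_powersetCard.mpr ⟨subset_univ _, hx.2.1⟩

theorem choose_eq_sum_Phi_general (k d p : ℕ) (hp : p = k * d) (hk : 1 < k) :
    (2 * p).choose p =
      ∑ i ∈ Finset.range (d + 1), ∑ j ∈ Finset.range (d + 1), Phi k d p i j := by
  have hk0 : 0 < k := by omega
  set B := {x ∈ Nat.antidiagonalTuple (2 * d) p | ∀ r, x r ≤ k}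
  have hcard : ∀ x ∈ B,
      (#(levelSet x 0), #(levelSet x k)) ∈ range (d + 1) ×ˢ range (d + 1) := by
    intro x hx
    rw [mem_filter, Nat.mem_antidiagonalTuple, hp, mul_comm k d] at hx
    have hzeros := card_levelSet_zero_le_of_sum_eq hk0 hx.2 hx.1
    have hks := card_levelSet_le_of_sum_eq hk0 hx.1
    simp only [mem_product, mem_range, Fintype.card_fin] at hzeros ⊢
    omega
  calc (2 * p).choose p = ∑ x ∈ Nat.antidiagonalTuple (2 * d) p, ∏ r, k.choose (x r) := by
        rw [Nat.sum_antidiagonalTuple_prod_choose, hp, mul_right_comm, mul_assoc]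
    _ = ∑ x ∈ B, ∏ r, k.choose (x r) := by
        refine (sum_filter_of_ne fun x _ hx r => not_lt.mp fun h => hx ?_).symm
        exact prod_eq_zero (mem_univ r) (Nat.choose_eq_zero_of_lt h)
    _ = ∑ ij ∈ range (d + 1) ×ˢ range (d + 1),
          ∑ x ∈ B with (#(levelSet x 0), #(levelSet x k)) = ij, ∏ r, k.choose (x r) :=
        (sum_fiberwise_of_maps_to hcard _).symm
    _ = ∑ i ∈ range (d + 1), ∑ j ∈ range (d + 1), Phi k d p i j := by
        rw [sum_product]
        exact sum_congr rfl fun i _ => sum_congr rfl fun j _ =>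
          (Phi_eq_sum_filter_card_levelSet hk0.ne' d p i j).symm

/-- `C(2p,p)` decomposes as the sum of all `Φ(p,d,[i,j])`. -/
theorem choose_eq_sum_Phi (k d p : ℕ) (hp : p = k * d) (hk : 1 < k) (hkp : k < p)
    (hd : 1 < d) (hdp : d < p) :
    (2 * p).choose p =
      ∑ i ∈ Finset.range (d + 1), ∑ j ∈ Finset.range (d + 1), Phi k d p i j :=
  choose_eq_sum_Phi_general k d p hp hk
end

section
/- For every odd integer p ≥ 5, writing x = ⌊p/2⌋, Φ_odd(p) = C(2p,p) − 4·C(3x+2, x+1) − 4·C(3x+1, x) + 2·C(2x+2, x+1) + 8·C(2x+1, x) + 2·C(2x, x) − 4. -/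
/-! With `p = 2x + 1`, `Φ_odd(p)` is the coefficient of `X^p` in `P_{x+1}² P_x²`, where
`P_n = (1 + X)^n - 1 - X^n` has coefficients `C(n, j)` for `0 < j < n`. Put `u = (1 + X)^(x+1) - 1`
and `v = (1 + X)^x - 1`, both divisible by `X`. In `(u - X^(x+1))² (v - X^x)²` every term
other than `u²v²`, `-2 X^x u²v` and `-2 X^(x+1) u v²` is divisible by `X^(p+1)`, and the three
remaining coefficients are sums of binomial coefficients of powers of `1 + X`. -/

open Finset

/-- `Φ_odd(p)` for odd `p`, with `x = ⌊p/2⌋`: the sum over tuples `(x_1,x_2,x_3,x_4)`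
with `Σ x_i = p`, `1 ≤ x_1, x_2 ≤ x` and `1 ≤ x_3, x_4 ≤ x−1`, of
`C(x+1,x_1)·C(x+1,x_2)·C(x,x_3)·C(x,x_4)`. -/
def PhiOdd (p : ℕ) : ℕ :=
  ∑ t ∈ (Finset.Nat.antidiagonalTuple 4 p).filter
      (fun t => 1 ≤ t 0 ∧ t 0 ≤ p / 2 ∧ 1 ≤ t 1 ∧ t 1 ≤ p / 2 ∧
        1 ≤ t 2 ∧ t 2 ≤ p / 2 - 1 ∧ 1 ≤ t 3 ∧ t 3 ≤ p / 2 - 1),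
    (p / 2 + 1).choose (t 0) * (p / 2 + 1).choose (t 1) *
      (p / 2).choose (t 2) * (p / 2).choose (t 3)

open Polynomial

namespace Polynomial

variable {R : Type*}

theorem coeff_prod_fin [CommSemiring R] {k : ℕ} (Q : Fin k → R[X]) (n : ℕ) :
    (∏ i, Q i).coeff n = ∑ t ∈ Nat.antidiagonalTuple k n, ∏ i, (Q i).coeff (t i) := by
  rw [← coeff_coe, ← piAntidiag_univ_fin_eq_antidiagonalTuple, ← sum_attach]
  simp only [← coeToPowerSeries.ringHom_apply, map_prod, PowerSeries.coeff_prod, finsuppAntidiag,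
    sum_map]
  simp [coeff_coe]

theorem X_dvd_one_add_X_pow_sub_one [Ring R] (n : ℕ) : (X : R[X]) ∣ (1 + X) ^ n - 1 := by
  simp [X_dvd_iff, coeff_one_add_X_pow]

theorem coeff_sq_mul_sq_sub_X_pow [CommRing R] {u v : R[X]} (hu : X ∣ u) (hv : X ∣ v)
    (x : ℕ) :
    ((u - X ^ (x + 1)) ^ 2 * (v - X ^ x) ^ 2).coeff (2 * x + 1) =
      (u ^ 2 * v ^ 2).coeff (2 * x + 1) - 2 * (u ^ 2 * v).coeff (x + 1)
        - 2 * (u * v ^ 2).coeff x := by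
  obtain ⟨u, rfl⟩ := hu
  obtain ⟨v, rfl⟩ := hv
  have hdecomp : (X * u - X ^ (x + 1)) ^ 2 * (X * v - X ^ x) ^ 2 =
      (X * u) ^ 2 * (X * v) ^ 2 - 2 * (X ^ x * ((X * u) ^ 2 * (X * v)))
        - 2 * (X ^ (x + 1) * (X * u * (X * v) ^ 2))
        + X ^ (2 * x + 2) *
          (X ^ 2 * v ^ 2 + 4 * X * u * v - 2 * X ^ (x + 1) * v + (u - X ^ x) ^ 2) := by
    ring
  rw [hdecomp, coeff_add, coeff_sub, coeff_sub, coeff_ofNat_mul, coeff_ofNat_mul,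
    coeff_X_pow_mul', coeff_X_pow_mul', coeff_X_pow_mul', if_pos (by omega), if_pos (by omega),
    if_neg (by omega), add_zero, show 2 * x + 1 - x = x + 1 by omega,
    show 2 * x + 1 - (x + 1) = x by omega]

theorem coeff_sq_mul_sq_one_add_X_pow_sub_one [CommRing R] (a b : ℕ) {n : ℕ} (hn : n ≠ 0) :
    ((((1 + X) ^ a - 1) ^ 2 * ((1 + X) ^ b - 1) ^ 2 : R[X])).coeff n =
      (2 * a + 2 * b).choose n - 2 * (2 * a + b).choose n - 2 * (a + 2 * b).choose n
        + (2 * a).choose n + 4 * (a + b).choose n + (2 * b).choose n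
        - 2 * a.choose n - 2 * b.choose n := by
  have hexpand : (((1 + X) ^ a - 1) ^ 2 * ((1 + X) ^ b - 1) ^ 2 : R[X]) =
      (1 + X) ^ (2 * a + 2 * b) - 2 * (1 + X) ^ (2 * a + b) - 2 * (1 + X) ^ (a + 2 * b)
        + (1 + X) ^ (2 * a) + 4 * (1 + X) ^ (a + b) + (1 + X) ^ (2 * b)
        - 2 * (1 + X) ^ a - 2 * (1 + X) ^ b + 1 := by
    ring
  simp [hexpand, coeff_one_add_X_pow, coeff_one, hn]

theorem coeff_sq_mul_one_add_X_pow_sub_one [CommRing R] (a b : ℕ) {n : ℕ} (hn : n ≠ 0) :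
    ((((1 + X) ^ a - 1) ^ 2 * ((1 + X) ^ b - 1) : R[X])).coeff n =
      (2 * a + b).choose n - (2 * a).choose n - 2 * (a + b).choose n
        + 2 * a.choose n + b.choose n := by
  have hexpand : (((1 + X) ^ a - 1) ^ 2 * ((1 + X) ^ b - 1) : R[X]) =
      (1 + X) ^ (2 * a + b) - (1 + X) ^ (2 * a) - 2 * (1 + X) ^ (a + b)
        + 2 * (1 + X) ^ a + (1 + X) ^ b - 1 := by
    ring
  simp [hexpand, coeff_one_add_X_pow, coeff_one, hn]

end Polynomial

noncomputable def innerBinomial (R : Type*) [Ring R] (n : ℕ) : R[X] := (1 + X) ^ n - 1 - X ^ n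

theorem coeff_innerBinomial {R : Type*} [Ring R] {n : ℕ} (hn : n ≠ 0) (j : ℕ) :
    (innerBinomial R n).coeff j = if 1 ≤ j ∧ j ≤ n - 1 then (n.choose j : R) else 0 := by
  rw [innerBinomial, coeff_sub, coeff_sub, coeff_one_add_X_pow, coeff_one, coeff_X_pow]
  rcases Nat.lt_or_ge n j with hj | hj
  · simp [Nat.choose_eq_zero_of_lt hj, show j ≠ 0 by omega, show j ≠ n by omega,
      show ¬ j ≤ n - 1 by omega]
  obtain rfl | rfl | hj' : j = 0 ∨ j = n ∨ (1 ≤ j ∧ j ≤ n - 1) := by omega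
  · simp [Ne.symm hn]
  · simp [hn, show ¬ j ≤ j - 1 by omega]
  · simp [hj', show j ≠ 0 by omega, show j ≠ n by omega]

theorem phiOdd_eq_coeff {x : ℕ} (hx : x ≠ 0) :
    (PhiOdd (2 * x + 1) : ℤ) =
      (innerBinomial ℤ (x + 1) ^ 2 * innerBinomial ℤ x ^ 2).coeff (2 * x + 1) := by
  have hprod : innerBinomial ℤ (x + 1) ^ 2 * innerBinomial ℤ x ^ 2 =
      ∏ i, ![innerBinomial ℤ (x + 1), innerBinomial ℤ (x + 1), innerBinomial ℤ x,
        innerBinomial ℤ x] i := by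
    simp only [Fin.prod_univ_four, Matrix.cons_val]
    ring
  rw [PhiOdd, show (2 * x + 1) / 2 = x by omega, hprod, coeff_prod_fin, sum_filter, Nat.cast_sum]
  refine sum_congr rfl fun t _ => ?_
  simp only [Fin.prod_univ_four, Matrix.cons_val, coeff_innerBinomial x.add_one_ne_zero,
    coeff_innerBinomial hx, ite_zero_mul_ite_zero, Nat.add_sub_cancel, and_assoc]
  split_ifs <;> simp

/-- Closed form for `Φ_odd(p)` when `p ≥ 5` is odd, with `x = ⌊p/2⌋`. -/
theorem PhiOdd_eq (p : ℕ) (hp : 5 ≤ p) (hodd : Odd p) :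
    (PhiOdd p : ℤ) =
      (2 * p).choose p - 4 * (3 * (p / 2) + 2).choose (p / 2 + 1)
        - 4 * (3 * (p / 2) + 1).choose (p / 2)
        + 2 * (2 * (p / 2) + 2).choose (p / 2 + 1)
        + 8 * (2 * (p / 2) + 1).choose (p / 2)
        + 2 * (2 * (p / 2)).choose (p / 2) - 4 := by
  obtain ⟨x, rfl⟩ := hodd
  rw [show (2 * x + 1) / 2 = x by omega, phiOdd_eq_coeff (by omega), innerBinomial, innerBinomial,
    coeff_sq_mul_sq_sub_X_pow (X_dvd_one_add_X_pow_sub_one _) (X_dvd_one_add_X_pow_sub_one _),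
    mul_comm ((1 + X) ^ (x + 1) - 1), coeff_sq_mul_sq_one_add_X_pow_sub_one _ _ (by omega),
    coeff_sq_mul_one_add_X_pow_sub_one _ _ (by omega),
    coeff_sq_mul_one_add_X_pow_sub_one _ _ (by omega)]
  have hsymm₁ : (2 * (x + 1) + x).choose (2 * x + 1) = (2 * (x + 1) + x).choose (x + 1) :=
    Nat.choose_symm_of_eq_add (by ring)
  have hsymm₂ : (x + 1 + 2 * x).choose (2 * x + 1) = (x + 1 + 2 * x).choose x :=
    Nat.choose_symm_of_eq_add (by ring)
  have hsymm₃ : (x + 1 + x).choose (x + 1) = (x + 1 + x).choose x :=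
    Nat.choose_symm_of_eq_add (by ring)
  have hsucc_self : (2 * (x + 1)).choose (2 * x + 1) = 2 * x + 2 := by
    rw [show 2 * (x + 1) = 2 * x + 1 + 1 by ring, Nat.choose_succ_self_right]
  have hself : (x + 1 + x).choose (2 * x + 1) = 1 := by
    rw [show x + 1 + x = 2 * x + 1 by ring, Nat.choose_self]
  simp (disch := omega) only [hsymm₁, hsymm₂, hsymm₃, hsucc_self, hself,
    Nat.choose_eq_zero_of_lt, Nat.choose_self, Nat.choose_succ_self_right]
  push_cast
  ring_nf
end

section
/- For every even integer p ≥ 14 and every divisor d of p with 3 ≤ d < p, we have C(2p − p/d, p) − 8·C(3p/2, p) + 12·C(p, p/2) − 6 > 0. -/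
/-!
Write `p = 2q`. As `d ≥ 3` and `q ≥ 7`, `p / d ≤ q - 3`, so the first binomial coefficient is at
least `C(3q + 3, 2q)`. Raising the top index of `C(3q, 2q)` three times multiplies it by
`(3q+1)(3q+2)(3q+3) / ((q+1)(q+2)(q+3)) ≥ 8`, which absorbs `8·C(3p/2, p)`, and
`12·C(p, p/2) - 6` is positive.
-/

namespace Nat

theorem choose_mul_succ_ascFactorial {n k : ℕ} (hk : k ≤ n + 1) (m : ℕ) :
    n.choose k * (n + 1).ascFactorial m = (n + m).choose k * (n + 1 - k).ascFactorial m := by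
  induction m with
  | zero => simp
  | succ m ih =>
    have hsub : n + m + 1 - k = n + 1 - k + m := by omega
    calc n.choose k * (n + 1).ascFactorial (m + 1)
        = n.choose k * (n + 1).ascFactorial m * (n + m + 1) := by
          rw [ascFactorial_succ]; ring
      _ = (n + m).choose k * (n + m + 1) * (n + 1 - k).ascFactorial m := by rw [ih]; ring
      _ = (n + m + 1).choose k * (n + 1 - k).ascFactorial (m + 1) := by
          rw [choose_mul_succ_eq, hsub, ascFactorial_succ]; ring

theorem eight_mul_choose_three_mul_le {q : ℕ} (hq : 2 ≤ q) :
    8 * (3 * q).choose (2 * q) ≤ (3 * q + 3).choose (2 * q) := by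
  have hshift : (3 * q).choose (2 * q) * ((3 * q + 1) * (3 * q + 2) * (3 * q + 3)) =
      (3 * q + 3).choose (2 * q) * ((q + 1) * (q + 2) * (q + 3)) := by
    have h := choose_mul_succ_ascFactorial (n := 3 * q) (k := 2 * q) (by omega) 3
    rw [show 3 * q + 1 - 2 * q = q + 1 by omega] at h
    simpa [ascFactorial_succ, add_assoc, mul_comm, mul_left_comm] using h
  have hratio : 8 * ((q + 1) * (q + 2) * (q + 3)) ≤ (3 * q + 1) * (3 * q + 2) * (3 * q + 3) := by
    obtain ⟨r, rfl⟩ : ∃ r, q = r + 2 := ⟨q - 2, by omega⟩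
    ring_nf; omega
  refine le_of_mul_le_mul_right ?_ (by positivity : 0 < (q + 1) * (q + 2) * (q + 3))
  calc 8 * (3 * q).choose (2 * q) * ((q + 1) * (q + 2) * (q + 3))
      = (3 * q).choose (2 * q) * (8 * ((q + 1) * (q + 2) * (q + 3))) := by ring
    _ ≤ (3 * q).choose (2 * q) * ((3 * q + 1) * (3 * q + 2) * (3 * q + 3)) :=
        Nat.mul_le_mul_left _ hratio
    _ = _ := hshift

theorem two_mul_div_le_sub_three {q d : ℕ} (hq : 7 ≤ q) (hd : 3 ≤ d) : 2 * q / d ≤ q - 3 :=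
  calc 2 * q / d ≤ 2 * q / 3 := Nat.div_le_div_left hd (by norm_num)
    _ ≤ q - 3 := by omega

end Nat

theorem claim_even_general (p d : ℕ) (hp : 14 ≤ p) (hev : Even p) (hd : 3 ≤ d) :
    0 < ((2 * p - p / d).choose p : ℤ) - 8 * (3 * p / 2).choose p
        + 12 * p.choose (p / 2) - 6 := by
  obtain ⟨q, rfl⟩ := hev
  rw [← two_mul] at hp ⊢
  have hdiv := Nat.two_mul_div_le_sub_three (q := q) (d := d) (by omega) hd
  have hmono : (3 * q + 3).choose (2 * q) ≤ (2 * (2 * q) - 2 * q / d).choose (2 * q) :=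
    Nat.choose_le_choose _ (by omega)
  have htriple := Nat.eight_mul_choose_three_mul_le (q := q) (by omega)
  have hcentral : 0 < (2 * q).choose q := Nat.choose_pos (by omega)
  rw [show 3 * (2 * q) / 2 = 3 * q by omega, show 2 * q / 2 = q by omega]
  omega

/-- For even `p ≥ 14` and any divisor `d` of `p` with `3 ≤ d < p`,
`C(2p − p/d, p) − 8·C(3p/2, p) + 12·C(p, p/2) − 6 > 0`. -/
theorem claim_even (p d : ℕ) (hp : 14 ≤ p) (hev : Even p) (hdvd : d ∣ p)
    (hd : 3 ≤ d) (hdp : d < p) :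
    0 < ((2 * p - p / d).choose p : ℤ) - 8 * (3 * p / 2).choose p
        + 12 * p.choose (p / 2) - 6 :=
  claim_even_general p d hp hev hd
end

section
/- For every odd integer p ≥ 17 and every divisor d of p with 3 ≤ d < p, writing x = ⌊p/2⌋, we have C(2p − p/d, p) − 4·C(3x+2, x+1) − 4·C(3x+1, x) > 0. -/
/-!
Write `p = 2m + 1` and `q = p / d ≤ p / 3`. While `n + 1 ≤ 2p`, passing from `C(n, p)` to
`C(n + 1, p)` at least doubles the coefficient, so `m - q ≥ 3` steps from `n = 3m + 2` up to
`n = 2p - q` give `C(2p - q, p) ≥ 8·C(3m + 2, p) = 8·C(3m + 2, m + 1)`. By Pascal's rule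
`C(3m + 1, m) < C(3m + 2, m + 1)`, so both subtracted terms are beaten by `4·C(3m + 2, m + 1)`.
-/

namespace Nat

theorem two_mul_choose_le_choose_succ {n k : ℕ} (hkn : k ≤ n) (hnk : n + 1 ≤ 2 * k) :
    2 * n.choose k ≤ (n + 1).choose k := by
  have hpos : 0 < n + 1 - k := by omega
  refine le_of_mul_le_mul_right ?_ hpos
  calc 2 * n.choose k * (n + 1 - k) = n.choose k * (2 * (n + 1 - k)) := by ring
    _ ≤ n.choose k * (n + 1) := Nat.mul_le_mul_left _ (by omega)
    _ = (n + 1).choose k * (n + 1 - k) := choose_mul_succ_eq n k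

theorem two_pow_mul_choose_le_choose_add {n k : ℕ} (hkn : k ≤ n) :
    ∀ s, n + s ≤ 2 * k → 2 ^ s * n.choose k ≤ (n + s).choose k
  | 0, _ => by simp
  | s + 1, h => calc
      2 ^ (s + 1) * n.choose k = 2 * (2 ^ s * n.choose k) := by ring
      _ ≤ 2 * (n + s).choose k :=
        Nat.mul_le_mul_left _ (two_pow_mul_choose_le_choose_add hkn s (by omega))
      _ ≤ (n + s + 1).choose k := two_mul_choose_le_choose_succ (by omega) (by omega)

theorem choose_lt_choose_succ_succ {n k : ℕ} (hkn : k < n) :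
    n.choose k < (n + 1).choose (k + 1) := by
  rw [choose_succ_succ']
  exact Nat.lt_add_of_pos_right (choose_pos hkn)

end Nat

theorem claim_odd_general (p d : ℕ) (hp : 17 ≤ p) (hodd : Odd p)
    (hd : 3 ≤ d) :
    0 < ((2 * p - p / d).choose p : ℤ) - 4 * (3 * (p / 2) + 2).choose (p / 2 + 1)
        - 4 * (3 * (p / 2) + 1).choose (p / 2) := by
  obtain ⟨m, rfl⟩ := hodd
  rw [show (2 * m + 1) / 2 = m by omega]
  have hq : (2 * m + 1) / d ≤ (2 * m + 1) / 3 := Nat.div_le_div_left hd (by norm_num)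
  generalize (2 * m + 1) / d = q at hq ⊢
  have hgrow := Nat.two_pow_mul_choose_le_choose_add (n := 3 * m + 2) (k := 2 * m + 1)
    (by omega) (m - q) (by omega)
  rw [show 3 * m + 2 + (m - q) = 2 * (2 * m + 1) - q by omega,
    Nat.choose_symm_of_eq_add (show 3 * m + 2 = (2 * m + 1) + (m + 1) by ring)] at hgrow
  have h8 : 2 ^ 3 * (3 * m + 2).choose (m + 1) ≤ 2 ^ (m - q) * (3 * m + 2).choose (m + 1) :=
    Nat.mul_le_mul_right _ (Nat.pow_le_pow_right (by norm_num) (by omega))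
  have hpascal : (3 * m + 1).choose m < (3 * m + 2).choose (m + 1) :=
    Nat.choose_lt_choose_succ_succ (by omega)
  omega

/-- For odd `p ≥ 17` and any divisor `d` of `p` with `3 ≤ d < p`, writing `x = ⌊p/2⌋`,
`C(2p − p/d, p) − 4·C(3x+2, x+1) − 4·C(3x+1, x) > 0`. -/
theorem claim_odd (p d : ℕ) (hp : 17 ≤ p) (hodd : Odd p) (hdvd : d ∣ p)
    (hd : 3 ≤ d) (hdp : d < p) :
    0 < ((2 * p - p / d).choose p : ℤ) - 4 * (3 * (p / 2) + 2).choose (p / 2 + 1)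
        - 4 * (3 * (p / 2) + 1).choose (p / 2) :=
  claim_odd_general p d hp hodd hd
end

section
/- Let p = kd with integers k, d satisfying 1 < k, d < p and d ≥ 3. Then C(2p,p) − Φ*(p,d) ≥ C(2p − p/d, p). -/
/-!
By the multi-fold Vandermonde identity, `Σ Π C(m_i, x_i)` over all tuples with `Σ x_i = p` is
`C(Σ m_i, p)`. With all `m_i = k` and `2d` coordinates this is `C(2p, p)`, and the tuples with
`x_1 = 0` contribute `C((2d − 1)k, p) = C(2p − p/d, p)`. Every tuple counted by `Φ*` has
`x_1 ≥ 1`, so `Φ*` is at most the difference.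
-/

open Finset

namespace Finset.Nat

theorem sum_antidiagonalTuple_succ {M : Type*} [AddCommMonoid M] (n p : ℕ)
    (f : (Fin (n + 1) → ℕ) → M) :
    ∑ x ∈ antidiagonalTuple (n + 1) p, f x =
      ∑ ab ∈ antidiagonal p, ∑ y ∈ antidiagonalTuple n ab.2, f (Fin.cons ab.1 y) := by
  rw [sum_sigma']
  refine sum_nbij' (fun x : Fin (n + 1) → ℕ => ⟨(x 0, ∑ i : Fin n, x i.succ), Fin.tail x⟩)
    (fun z => Fin.cons z.1.1 z.2) ?_ ?_ ?_ ?_ ?_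
  · intro x hx
    rw [mem_antidiagonalTuple, Fin.sum_univ_succ] at hx
    simpa [mem_antidiagonalTuple, Fin.tail] using hx
  · rintro ⟨⟨a, b⟩, y⟩ hz
    simp only [mem_sigma, HasAntidiagonal.mem_antidiagonal, mem_antidiagonalTuple] at hz
    rw [mem_antidiagonalTuple, Fin.sum_cons, hz.2, hz.1]
  · intro x _
    simp
  · rintro ⟨⟨a, b⟩, y⟩ hz
    simp only [mem_sigma, HasAntidiagonal.mem_antidiagonal, mem_antidiagonalTuple] at hz
    simp [hz.2]
  · intro x _
    simp

theorem sum_antidiagonalTuple_prod_choose_s17 (n : ℕ) (m : Fin n → ℕ) (p : ℕ) :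
    ∑ x ∈ antidiagonalTuple n p, ∏ i, (m i).choose (x i) = (∑ i, m i).choose p := by
  induction n generalizing p with
  | zero => cases p <;> simp [antidiagonalTuple_zero_zero, antidiagonalTuple_zero_succ]
  | succ n ih =>
    rw [sum_antidiagonalTuple_succ, Fin.sum_univ_succ, Nat.add_choose_eq]
    refine sum_congr rfl fun ab _ => ?_
    simp only [Fin.prod_univ_succ, Fin.cons_zero, Fin.cons_succ, ← mul_sum]
    rw [ih (fun i => m i.succ) ab.2]

theorem sum_filter_apply_eq_zero_prod_choose (n : ℕ) (m : Fin (n + 1) → ℕ) (i : Fin (n + 1))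
    (p : ℕ) :
    ∑ x ∈ antidiagonalTuple (n + 1) p with x i = 0, ∏ j, (m j).choose (x j) =
      (∑ j, m (i.succAbove j)).choose p := by
  rw [← sum_antidiagonalTuple_prod_choose_s17]
  refine sum_nbij' i.removeNth (fun y => i.insertNth 0 y) ?_ ?_ ?_ ?_ ?_
  · intro x hx
    simp only [mem_filter, mem_antidiagonalTuple] at hx
    rw [mem_antidiagonalTuple, ← hx.1, Fin.sum_univ_succAbove _ i, hx.2, zero_add]
    rfl
  · intro y hy
    rw [mem_antidiagonalTuple] at hy
    simp [mem_antidiagonalTuple, Fin.sum_univ_succAbove _ i, hy]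
  · intro x hx
    simp only [mem_filter] at hx
    rw [← hx.2, Fin.insertNth_self_removeNth]
  · intro y _
    exact Fin.removeNth_insertNth (α := fun _ => ℕ) i 0 y
  · intro x hx
    simp only [mem_filter] at hx
    rw [Fin.prod_univ_succAbove _ i, hx.2, Nat.choose_zero_right, one_mul]
    rfl

theorem sum_filter_prod_choose_add_choose_le {N : ℕ} (m : Fin N → ℕ) (i : Fin N) (p : ℕ)
    (P : (Fin N → ℕ) → Prop) [DecidablePred P] (hP : ∀ x, P x → x i ≠ 0) :
    ∑ x ∈ antidiagonalTuple N p with P x, ∏ j, (m j).choose (x j) +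
      (∑ j, m j - m i).choose p ≤ (∑ j, m j).choose p := by
  obtain ⟨n, rfl⟩ := Nat.exists_eq_add_one_of_ne_zero i.pos.ne'
  have hsub : ∑ j, m j - m i = ∑ j, m (i.succAbove j) := by
    rw [Fin.sum_univ_succAbove m i, Nat.add_sub_cancel_left]
  rw [hsub, ← sum_filter_apply_eq_zero_prod_choose, ← sum_antidiagonalTuple_prod_choose_s17,
    ← sum_filter_not_add_sum_filter (antidiagonalTuple (n + 1) p) (fun x => x i = 0)]
  refine Nat.add_le_add_right (sum_le_sum_of_subset fun x hx => ?_) _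
  simp only [mem_filter] at hx ⊢
  exact ⟨hx.1, hP x hx.2⟩

end Finset.Nat

theorem choose_sub_PhiStar_ge_general (k d p : ℕ) (hp : p = k * d) (hd : 1 < d) :
    ((2 * p - p / d).choose p : ℤ) ≤ ((2 * p).choose p : ℤ) - PhiStar k d p := by
  have hpd : p / d = k := by rw [hp, Nat.mul_div_cancel k (by omega)]
  have hsum : ∑ _j : Fin (2 * d), k = 2 * p := by
    simp only [sum_const, card_univ, Fintype.card_fin, smul_eq_mul, hp]; ring
  have key := Finset.Nat.sum_filter_prod_choose_add_choose_le (fun _ : Fin (2 * d) => k)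
    ⟨0, by omega⟩ p (fun x => ∀ i, 1 ≤ x i ∧ x i ≤ k - 1)
    fun x hx => by have := (hx ⟨0, by omega⟩).1; omega
  rw [hsum] at key
  change PhiStar k d p + _ ≤ _ at key
  rw [hpd]
  zify at key
  linarith

/-- For `p = k·d` with `1 < k, d < p` and `d ≥ 3`:
`C(2p,p) − Φ*(p,d) ≥ C(2p − p/d, p)`. -/
theorem choose_sub_PhiStar_ge (k d p : ℕ) (hp : p = k * d) (hk : 1 < k) (hkp : k < p)
    (hd : 1 < d) (hdp : d < p) (hd3 : 3 ≤ d) :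
    ((2 * p - p / d).choose p : ℤ) ≤ ((2 * p).choose p : ℤ) - PhiStar k d p :=
  choose_sub_PhiStar_ge_general k d p hp hd
end

section
/- Suppose p ≥ 4 is an integer with p = kd for some integers k, d with 1 < k, d < p. Then for every integer q with 2k+2 ≤ q ≤ Φ*(p,d) + 2, the complete tripartite graph K(p,p,q) admits a strong orientation of diameter 2; hence its orientation number equals 2. -/
open Finset

/-!
Split each of the two parts of size `p = kd` into `d` blocks of size `k`, and orient the first
part towards the second inside a block and backwards across blocks. A vertex `c` of the third
part is described by the set `S_c` of vertices of the first two parts that send an arc to `c`;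
all other arcs at `c` leave it. Any two vertices are joined by a path of length at most 2
provided that the sets "whole first part" and "whole second part" occur, every other `S_c`
meets every block in a nonempty proper subset, all `S_c` have size `p` (so that distinct ones are
incomparable), and inside every block any two vertices are separated by some `S_c`. The `k` sets
"block minus `{m}` in the first part, `{m}` in the second" give the separation, and the remaining
`q - k - 2` sets are chosen among the `Φ*(p,d)` sets with proper traces of total size `p`.
Two vertices of one part are not adjacent, so no orientation has diameter 1.
-/

namespace Kppq

lemma exists_eq_iff_of_nontrivial {α : Type*} [Nontrivial α] (a : α) (P : Prop) :
    ∃ b, (b = a ↔ P) := by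
  by_cases hP : P
  · exact ⟨a, by simp [hP]⟩
  · obtain ⟨b, hb⟩ := exists_ne a
    exact ⟨b, by simp [hb, hP]⟩

lemma exists_mem_not_mem_of_sum_card_eq {ι α : Type*} [Fintype ι] {f g : ι → Finset α}
    (hfg : f ≠ g) (h : ∑ i, #(f i) = ∑ i, #(g i)) : ∃ i, ∃ x ∈ g i, x ∉ f i := by
  by_contra! hsub
  have hle i : #(g i) ≤ #(f i) := card_le_card (hsub i)
  have heq := (sum_eq_sum_iff_of_le fun i _ => hle i).1 h.symm
  exact hfg (funext fun i => (eq_of_subset_of_card_le (hsub i) (heq i (mem_univ i)).ge).symm)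

section Digraph

variable {V W : Type*} {D : V → V → Prop} {u v : V}

def WithinTwo (D : V → V → Prop) (u v : V) : Prop :=
  u = v ∨ D u v ∨ ∃ w, D u w ∧ D w v

lemma ddist_le_of_hasPath {m : ℕ} (h : hasPath D u v m) : ddist D u v ≤ m :=
  sInf_le ⟨m, h, rfl⟩

lemma WithinTwo.exists_hasPath (h : WithinTwo D u v) : ∃ m ≤ 2, hasPath D u v m := by
  rcases h with rfl | h | ⟨w, h₁, h₂⟩
  exacts [⟨0, by norm_num, rfl⟩, ⟨1, by norm_num, v, h, rfl⟩, ⟨2, le_rfl, w, h₁, v, h₂, rfl⟩]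

lemma WithinTwo.ddist_le (h : WithinTwo D u v) : ddist D u v ≤ 2 := by
  obtain ⟨m, hm, hpath⟩ := h.exists_hasPath
  exact (ddist_le_of_hasPath hpath).trans (by exact_mod_cast hm)

lemma WithinTwo.comap {D : W → W → Prop} (e : V ≃ W) (h : WithinTwo D (e u) (e v)) :
    WithinTwo (fun a b => D (e a) (e b)) u v := by
  rcases h with h | h | ⟨w, h₁, h₂⟩
  · exact .inl (e.injective h)
  · exact .inr (.inl h)
  · exact .inr (.inr ⟨e.symm w, by simpa using h₁, by simpa using h₂⟩)

lemma isStrong_of_withinTwo (h : ∀ u v, WithinTwo D u v) : IsStrong D := fun u v =>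
  let ⟨m, _, hm⟩ := (h u v).exists_hasPath
  ⟨m, hm⟩

lemma two_le_ddist (hne : u ≠ v) (hnd : ¬ D u v) : 2 ≤ ddist D u v := by
  refine le_sInf ?_
  rintro _ ⟨m, hpath, rfl⟩
  match m, hpath with
  | 0, h => exact absurd h hne
  | 1, ⟨w, hw, (hwv : w = v)⟩ => exact absurd (hwv ▸ hw) hnd
  | m + 2, _ => exact_mod_cast Nat.le_add_left 2 m

lemma ddist_le_ddiam (u v : V) : ddist D u v ≤ ddiam V D :=
  le_iSup₂ (f := fun u v => ddist D u v) u v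

lemma ddiam_le_two (h : ∀ u v, WithinTwo D u v) : ddiam V D ≤ 2 :=
  iSup₂_le fun u v => (h u v).ddist_le

lemma two_le_ddiam_of_not_adj {G : SimpleGraph V} (hD : IsOrientation G D) (hne : u ≠ v)
    (huv : ¬ G.Adj u v) : 2 ≤ ddiam V D :=
  (two_le_ddist hne fun h => huv (hD.1 u v h)).trans (ddist_le_ddiam u v)

lemma isOrientation_comap {G : SimpleGraph V} {H : SimpleGraph W} {D : W → W → Prop}
    (e : G ≃g H) (hD : IsOrientation H D) : IsOrientation G fun u v => D (e u) (e v) :=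
  ⟨fun _ _ h => e.map_adj_iff.1 (hD.1 _ _ h), fun _ _ h => hD.2 _ _ (e.map_adj_iff.2 h)⟩

lemma ddiam_eq_two {G : SimpleGraph V} (hD : IsOrientation G D) (h2 : ∀ u v, WithinTwo D u v)
    (hne : u ≠ v) (huv : ¬ G.Adj u v) : ddiam V D = 2 :=
  le_antisymm (ddiam_le_two h2) (two_le_ddiam_of_not_adj hD hne huv)

theorem orientationNumber_eq_two {G : SimpleGraph V} (hD : IsOrientation G D)
    (h2 : ∀ u v, WithinTwo D u v) (hne : u ≠ v) (huv : ¬ G.Adj u v) :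
    orientationNumber G = 2 :=
  le_antisymm (sInf_le ⟨D, hD, isStrong_of_withinTwo h2, ddiam_eq_two hD h2 hne huv⟩)
    (le_sInf <| by rintro _ ⟨D', hD', -, rfl⟩; exact two_le_ddiam_of_not_adj hD' hne huv)

end Digraph

section Codes

variable {k d : ℕ}

/- A vertex `(s, x, i) : Vx k d` of the two parts of size `kd` lies on side `s`, in block `i`, at
position `x`. A code is a set of such vertices, stored slot by slot: `g (slot s i)` holds the
positions in block `i` of side `s`. -/
abbrev Vx (k d : ℕ) := Fin 2 × Fin k × Fin d

abbrev Code (k d : ℕ) := Fin (2 * d) → Finset (Fin k)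

def slot (s : Fin 2) (i : Fin d) : Fin (2 * d) := finProdFinEquiv (s, i)

def InCode (g : Code k d) (v : Vx k d) : Prop := v.2.1 ∈ g (slot v.1 v.2.2)

def ofSide (A : Fin 2 → Finset (Fin k)) : Code k d := fun j => A (finProdFinEquiv.symm j).1

@[simp] lemma ofSide_slot (A : Fin 2 → Finset (Fin k)) (s : Fin 2) (i : Fin d) :
    ofSide A (slot s i) = A s := by
  simp [ofSide, slot]

lemma sum_card_ofSide (A : Fin 2 → Finset (Fin k)) :
    ∑ j, #(ofSide (d := d) A j) = d * ∑ s, #(A s) := by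
  rw [← finProdFinEquiv.sum_comp]
  simp [ofSide, Fintype.sum_prod_type, mul_add]

def sideCode (s : Fin 2) : Code k d := ofSide fun t => if t = s then univ else ∅

def sepCode (m : Fin k) : Code k d := ofSide ![univ.erase m, {m}]

lemma inCode_sideCode {s : Fin 2} {v : Vx k d} : InCode (sideCode s) v ↔ v.1 = s := by
  simp only [InCode, sideCode, ofSide_slot]
  split_ifs with h <;> simp [h]

lemma sum_card_sideCode (s : Fin 2) : ∑ j, #(sideCode (k := k) (d := d) s j) = k * d := by
  simp only [sideCode, sum_card_ofSide, apply_ite card, card_univ, card_empty, Fintype.card_fin,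
    sum_ite_eq', mem_univ, if_true]
  ring

lemma sideCode_injective (hk : 0 < k) (hd : 0 < d) :
    Function.Injective (sideCode (k := k) (d := d)) := fun s t h =>
  inCode_sideCode.1 (h ▸ inCode_sideCode.2 rfl : InCode (sideCode t) (s, ⟨0, hk⟩, ⟨0, hd⟩))

lemma sepCode_injective (hd : 0 < d) : Function.Injective (sepCode (k := k) (d := d)) :=
  fun m m' h => by simpa [sepCode] using congrFun h (slot 1 ⟨0, hd⟩)

lemma exists_sepCode_separating (j : Fin (2 * d)) {x y : Fin k} (hxy : x ≠ y) :
    ∃ m, x ∈ sepCode m j ∧ y ∉ sepCode m j := by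
  have key : ∀ s : Fin 2, ∃ m, x ∈ ![univ.erase m, {m}] s ∧ y ∉ ![univ.erase m, {m}] s := by
    simp only [Fin.forall_fin_two]
    exact ⟨⟨y, by simp [hxy]⟩, ⟨x, by simp [hxy.symm]⟩⟩
  exact key _

def Admissible (g : Code k d) : Prop :=
  (∃ s, g = sideCode s) ∨ ∀ j, (g j).Nonempty ∧ g j ≠ univ

def blockArc (u v : Vx k d) : Prop := u.1 ≠ v.1 ∧ (u.2.2 = v.2.2 ↔ u.1 = 0)

lemma blockArc_iff_not_blockArc {u v : Vx k d} (h : u.1 ≠ v.1) :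
    blockArc u v ↔ ¬ blockArc v u := by
  obtain ⟨s, x, i⟩ := u
  obtain ⟨s', x', i'⟩ := v
  fin_cases s <;> fin_cases s' <;> simp_all [blockArc, eq_comm]

variable [Nontrivial (Fin d)] {g : Code k d}

lemma exists_blockArc_inCode (hg : Admissible g) {u : Vx k d} (hu : ¬ InCode g u) :
    ∃ z, blockArc u z ∧ InCode g z := by
  obtain ⟨s, x, i⟩ := u
  obtain ⟨b, hb⟩ := exists_eq_iff_of_nontrivial i (s = 0)
  replace hb := eq_comm.trans hb
  rcases hg with ⟨t, rfl⟩ | hg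
  · exact ⟨(t, x, b), ⟨fun h => hu (inCode_sideCode.2 h), hb⟩, inCode_sideCode.2 rfl⟩
  · obtain ⟨t, hts⟩ := exists_ne s
    obtain ⟨y, hy⟩ := (hg (slot t b)).1
    exact ⟨(t, y, b), ⟨hts.symm, hb⟩, hy⟩

lemma exists_not_inCode_blockArc (hg : Admissible g) {v : Vx k d} (hv : InCode g v) :
    ∃ z, ¬ InCode g z ∧ blockArc z v := by
  obtain ⟨s, x, i⟩ := v
  obtain ⟨t, hts⟩ := exists_ne s
  obtain ⟨b, hb⟩ := exists_eq_iff_of_nontrivial i (t = 0)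
  rcases hg with ⟨s', rfl⟩ | hg
  · exact ⟨(t, x, b), fun h => hts ((inCode_sideCode.1 h).trans (inCode_sideCode.1 hv).symm),
      hts, hb⟩
  · obtain ⟨y, hy⟩ : ∃ y, y ∉ g (slot t b) := by
      by_contra! h
      exact (hg (slot t b)).2 (eq_univ_iff_forall.2 h)
    exact ⟨(t, y, b), hy, hts, hb⟩

end Codes

section Orientation

variable {k d : ℕ}

structure IsGoodFamily (𝓕 : Finset (Code k d)) : Prop where
  card_sum : ∀ g ∈ 𝓕, ∑ j, #(g j) = k * d
  admissible : ∀ g ∈ 𝓕, Admissible g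
  sideCode_mem : ∀ s, sideCode s ∈ 𝓕
  separating : ∀ j x y, x ≠ y → ∃ g ∈ 𝓕, x ∈ g j ∧ y ∉ g j

def arc (𝓕 : Finset (Code k d)) : Vx k d ⊕ 𝓕 → Vx k d ⊕ 𝓕 → Prop
  | .inl u, .inl v => blockArc u v
  | .inl u, .inr g => InCode g u
  | .inr g, .inl v => ¬ InCode g v
  | .inr _, .inr _ => False

def part {α : Type*} : Vx k d ⊕ α → Fin 3 := Sum.elim (fun v => v.1.castSucc) fun _ => Fin.last 2

lemma isOrientation_arc (𝓕 : Finset (Code k d)) :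
    IsOrientation ((⊤ : SimpleGraph (Fin 3)).comap part) (arc 𝓕) := by
  constructor
  · rintro (u | g) (v | g') h
    · exact (Fin.castSucc_injective 2).ne h.1
    · exact (Fin.castSucc_lt_last _).ne
    · exact (Fin.castSucc_lt_last _).ne'
    · exact h.elim
  · rintro (u | g) (v | g') h
    · exact blockArc_iff_not_blockArc fun h' => h (congrArg Fin.castSucc h')
    · exact not_not.symm
    · exact Iff.rfl
    · exact absurd rfl h

variable {𝓕 : Finset (Code k d)}

lemma withinTwo_inl_inl (h𝓕 : IsGoodFamily 𝓕) (u v : Vx k d) :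
    WithinTwo (arc 𝓕) (.inl u) (.inl v) := by
  obtain ⟨s, x, i⟩ := u
  obtain ⟨s', x', i'⟩ := v
  by_cases hs : s = s'
  swap
  · exact .inr (.inr ⟨.inr ⟨sideCode s, h𝓕.sideCode_mem s⟩, inCode_sideCode.2 rfl,
      fun h => hs (inCode_sideCode.1 h).symm⟩)
  subst hs
  by_cases hi : i = i'
  · subst hi
    by_cases hx : x = x'
    · exact .inl (by rw [hx])
    obtain ⟨g, hg, hxg, hx'g⟩ := h𝓕.separating (slot s i) x x' hx
    exact .inr (.inr ⟨.inr ⟨g, hg⟩, hxg, hx'g⟩)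
  · refine .inr (.inr ?_)
    fin_cases s
    · exact ⟨.inl (1, x, i), by simp [arc, blockArc], by simp [arc, blockArc, hi]⟩
    · exact ⟨.inl (0, x', i'), by simp [arc, blockArc, hi], by simp [arc, blockArc]⟩

lemma withinTwo_inr_inr (h𝓕 : IsGoodFamily 𝓕) (g g' : 𝓕) :
    WithinTwo (arc 𝓕) (.inr g) (.inr g') := by
  by_cases h : g = g'
  · exact .inl (by rw [h])
  obtain ⟨j, x, hx', hx⟩ := exists_mem_not_mem_of_sum_card_eq (Subtype.coe_injective.ne h)
    (by rw [h𝓕.card_sum g g.2, h𝓕.card_sum g' g'.2])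
  obtain ⟨⟨s, i⟩, rfl⟩ := finProdFinEquiv.surjective j
  exact .inr (.inr ⟨.inl (s, x, i), hx, hx'⟩)

variable [Nontrivial (Fin d)]

lemma withinTwo_inl_inr (h𝓕 : IsGoodFamily 𝓕) (u : Vx k d) (g : 𝓕) :
    WithinTwo (arc 𝓕) (.inl u) (.inr g) := by
  by_cases hu : InCode g u
  · exact .inr (.inl hu)
  obtain ⟨z, hz, hzg⟩ := exists_blockArc_inCode (h𝓕.admissible g g.2) hu
  exact .inr (.inr ⟨.inl z, hz, hzg⟩)

lemma withinTwo_inr_inl (h𝓕 : IsGoodFamily 𝓕) (g : 𝓕) (v : Vx k d) :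
    WithinTwo (arc 𝓕) (.inr g) (.inl v) := by
  by_cases hv : InCode g v
  · obtain ⟨z, hzg, hz⟩ := exists_not_inCode_blockArc (h𝓕.admissible g g.2) hv
    exact .inr (.inr ⟨.inl z, hzg, hz⟩)
  · exact .inr (.inl hv)

lemma withinTwo_arc (h𝓕 : IsGoodFamily 𝓕) : ∀ w w', WithinTwo (arc 𝓕) w w'
  | .inl u, .inl v => withinTwo_inl_inl h𝓕 u v
  | .inl u, .inr g => withinTwo_inl_inr h𝓕 u g
  | .inr g, .inl v => withinTwo_inr_inl h𝓕 g v
  | .inr g, .inr g' => withinTwo_inr_inr h𝓕 g g'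

end Orientation

section Counting

variable {k d p : ℕ}

lemma card_filter_card_eq {ι α : Type*} [Fintype ι] [DecidableEq ι] [Fintype α] [DecidableEq α]
    (x : ι → ℕ) :
    #{g : ι → Finset α | (fun j => #(g j)) = x} = ∏ j, (Fintype.card α).choose (x j) := by
  have : ({g | (fun j => #(g j)) = x} : Finset (ι → Finset α)) =
      Fintype.piFinset fun j => powersetCard (x j) univ := by
    ext g
    simp [funext_iff]
  rw [this, Fintype.card_piFinset]
  simp

def profiles (k d p : ℕ) : Finset (Fin (2 * d) → ℕ) :=
  (Nat.antidiagonalTuple (2 * d) p).filter fun x => ∀ i, 1 ≤ x i ∧ x i ≤ k - 1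

def properCodes (k d p : ℕ) : Finset (Code k d) := {g | (fun j => #(g j)) ∈ profiles k d p}

lemma card_properCodes : #(properCodes k d p) = PhiStar k d p := by
  rw [card_eq_sum_card_fiberwise (f := fun g j => #(g j)) (t := profiles k d p)
    fun g hg => by simpa [properCodes] using hg]
  refine sum_congr rfl fun x hx => ?_
  have hfiber : (properCodes k d p).filter (fun g => (fun j => #(g j)) = x) =
      univ.filter fun g : Code k d => (fun j => #(g j)) = x := by
    ext g
    simp only [properCodes, mem_filter, mem_univ, true_and, and_iff_right_iff_imp]
    rintro rfl
    exact hx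
  rw [hfiber, card_filter_card_eq, Fintype.card_fin]

lemma mem_properCodes {g : Code k d} :
    g ∈ properCodes k d p ↔ (∀ j, 1 ≤ #(g j) ∧ #(g j) ≤ k - 1) ∧ ∑ j, #(g j) = p := by
  simp only [properCodes, profiles, mem_filter, mem_univ, true_and, Nat.mem_antidiagonalTuple,
    and_comm]

lemma admissible_of_mem_properCodes {g : Code k d} (hg : g ∈ properCodes k d p) :
    Admissible g := by
  refine .inr fun j => ?_
  have hj := (mem_properCodes.1 hg).1 j
  refine ⟨card_pos.1 (by omega), fun h => ?_⟩
  rw [h, card_univ, Fintype.card_fin] at hj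
  omega

lemma sideCode_not_mem_properCodes (hd : 0 < d) (s : Fin 2) :
    sideCode s ∉ properCodes k d p := by
  intro h
  obtain ⟨t, hts⟩ := exists_ne s
  simpa [sideCode, hts] using ((mem_properCodes.1 h).1 (slot t ⟨0, hd⟩)).1

lemma sepCode_mem_properCodes (hk : 1 < k) (m : Fin k) : sepCode m ∈ properCodes k d (k * d) := by
  have hcard : #(univ.erase m) = k - 1 := by simp [card_erase_of_mem]
  refine mem_properCodes.2 ⟨fun j => ?_, ?_⟩
  · have key : ∀ s : Fin 2, 1 ≤ #(![univ.erase m, {m}] s) ∧ #(![univ.erase m, {m}] s) ≤ k - 1 := by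
      simp only [Fin.forall_fin_two, Matrix.cons_val_zero, Matrix.cons_val_one, hcard,
        card_singleton]
      omega
    exact key _
  · rw [sepCode, sum_card_ofSide, Fin.sum_univ_two]
    simp only [Matrix.cons_val_zero, Matrix.cons_val_one, hcard, card_singleton]
    rw [Nat.sub_add_cancel (by omega), mul_comm]

lemma exists_goodFamily {q : ℕ} (hk : 1 < k) (hd : 0 < d) (hq : 2 * k + 2 ≤ q)
    (hq' : q ≤ PhiStar k d (k * d) + 2) :
    ∃ 𝓕 : Finset (Code k d), #𝓕 = q ∧ IsGoodFamily 𝓕 := by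
  have hsep : univ.image sepCode ⊆ properCodes k d (k * d) := by
    simpa [image_subset_iff] using sepCode_mem_properCodes hk
  obtain ⟨U, hsepU, hU, hUcard⟩ := exists_subsuperset_card_eq hsep (n := q - 2)
    (by rw [card_image_of_injective _ (sepCode_injective hd), card_univ, Fintype.card_fin]; omega)
    (by rw [card_properCodes]; omega)
  have hdisj : Disjoint (univ.image sideCode) U := by
    simp only [disjoint_left, mem_image, mem_univ, true_and]
    rintro _ ⟨s, rfl⟩ hs
    exact sideCode_not_mem_properCodes hd s (hU hs)
  refine ⟨univ.image sideCode ∪ U, ?_, ⟨?_, ?_, ?_, ?_⟩⟩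
  · rw [card_union_of_disjoint hdisj, card_image_of_injective _ (sideCode_injective (by omega) hd),
      card_univ, Fintype.card_fin]
    omega
  · simp only [mem_union, mem_image, mem_univ, true_and]
    rintro g (⟨s, rfl⟩ | hg)
    · exact sum_card_sideCode s
    · exact (mem_properCodes.1 (hU hg)).2
  · simp only [mem_union, mem_image, mem_univ, true_and]
    rintro g (⟨s, rfl⟩ | hg)
    · exact .inl ⟨s, rfl⟩
    · exact admissible_of_mem_properCodes (hU hg)
  · exact fun s => mem_union_left _ (mem_image_of_mem _ (mem_univ s))
  · intro j x y hxy
    obtain ⟨m, hm⟩ := exists_sepCode_separating j hxy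
    exact ⟨sepCode m, mem_union_right _ (hsepU (mem_image_of_mem _ (mem_univ m))), hm⟩

end Counting

section Ktri

def ktriEquiv (p q : ℕ) : (Σ i : Fin 3, Fin (![p, p, q] i)) ≃ (Fin 2 × Fin p) ⊕ Fin q where
  toFun
    | ⟨0, x⟩ => .inl (0, x)
    | ⟨1, x⟩ => .inl (1, x)
    | ⟨2, c⟩ => .inr c
  invFun
    | .inl (0, x) => ⟨0, x⟩
    | .inl (1, x) => ⟨1, x⟩
    | .inr c => ⟨2, c⟩
  left_inv := by rintro ⟨i, x⟩; fin_cases i <;> rfl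
  right_inv := by
    rintro (⟨s, x⟩ | c)
    · fin_cases s <;> rfl
    · rfl

variable {k d q : ℕ}

noncomputable def ktriVertexEquiv (𝓕 : Finset (Code k d)) (h𝓕 : #𝓕 = q) :
    (Σ i : Fin 3, Fin (![k * d, k * d, q] i)) ≃ Vx k d ⊕ 𝓕 :=
  (ktriEquiv (k * d) q).trans <|
    .sumCongr (.prodCongr (.refl _) finProdFinEquiv.symm) (𝓕.equivFinOfCardEq h𝓕).symm

lemma part_ktriVertexEquiv (𝓕 : Finset (Code k d)) (h𝓕 : #𝓕 = q)
    (u : Σ i : Fin 3, Fin (![k * d, k * d, q] i)) : part (ktriVertexEquiv 𝓕 h𝓕 u) = u.1 := by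
  obtain ⟨i, x⟩ := u
  fin_cases i <;> rfl

noncomputable def ktriIso (𝓕 : Finset (Code k d)) (h𝓕 : #𝓕 = q) :
    Ktri (k * d) (k * d) q ≃g (⊤ : SimpleGraph (Fin 3)).comap (part (k := k) (d := d) (α := 𝓕))
    where
  toEquiv := ktriVertexEquiv 𝓕 h𝓕
  map_rel_iff' {u v} := by
    simp [part_ktriVertexEquiv, Ktri]

theorem exists_orientation_withinTwo (hk : 1 < k) (hd : 1 < d)
    (hq : 2 * k + 2 ≤ q) (hq' : q ≤ PhiStar k d (k * d) + 2) :
    ∃ D, IsOrientation (Ktri (k * d) (k * d) q) D ∧ ∀ u v, WithinTwo D u v := by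
  have : Nontrivial (Fin d) := Fin.nontrivial_iff_two_le.2 hd
  obtain ⟨𝓕, h𝓕card, h𝓕⟩ := exists_goodFamily hk (by omega) hq hq'
  let e := ktriIso 𝓕 h𝓕card
  exact ⟨_, isOrientation_comap e (isOrientation_arc 𝓕),
    fun u v => (withinTwo_arc h𝓕 (e u) (e v)).comap e.toEquiv⟩

lemma Ktri_exists_ne_not_adj {a b c : ℕ} (ha : 1 < a) :
    ∃ u v, u ≠ v ∧ ¬ (Ktri a b c).Adj u v :=
  ⟨⟨0, ⟨0, by simp; omega⟩⟩, ⟨0, ⟨1, by simpa using ha⟩⟩,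
    fun h => absurd (congrArg (fun w => (w.2 : ℕ)) h) zero_ne_one, by simp [Ktri]⟩

end Ktri

end Kppq

theorem Kppq_orientation_number_general (p k d q : ℕ) (hp : p = k * d)
    (hk : 1 < k) (hd : 1 < d)
    (hq1 : 2 * k + 2 ≤ q) (hq2 : q ≤ PhiStar k d p + 2) :
    (∃ D, IsOrientation (Ktri p p q) D ∧ IsStrong D ∧ ddiam _ D = 2) ∧
      orientationNumber (Ktri p p q) = 2 := by
  subst hp
  obtain ⟨D, hD, h2⟩ := Kppq.exists_orientation_withinTwo hk hd hq1 hq2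
  obtain ⟨u, v, hne, huv⟩ :=
    Kppq.Ktri_exists_ne_not_adj (a := k * d) (b := k * d) (c := q) (by nlinarith)
  exact ⟨⟨D, hD, Kppq.isStrong_of_withinTwo h2, Kppq.ddiam_eq_two hD h2 hne huv⟩,
    Kppq.orientationNumber_eq_two hD h2 hne huv⟩

/-- For `p = kd ≥ 4` with `1 < k, d < p` and `2k+2 ≤ q ≤ Φ*(p,d)+2`, `K(p,p,q)` has a
strong orientation of diameter 2, so its orientation number is 2. -/
theorem Kppq_orientation_number (p k d q : ℕ) (hp4 : 4 ≤ p) (hp : p = k * d)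
    (hk : 1 < k) (hkp : k < p) (hd : 1 < d) (hdp : d < p)
    (hq1 : 2 * k + 2 ≤ q) (hq2 : q ≤ PhiStar k d p + 2) :
    (∃ D, IsOrientation (Ktri p p q) D ∧ IsStrong D ∧ ddiam _ D = 2) ∧
      orientationNumber (Ktri p p q) = 2 :=
  Kppq_orientation_number_general p k d q hp hk hd hq1 hq2
end

section
/- Let n ≥ 2, let p_1,...,p_n be positive integers, and suppose there is an index r with p_1 + ... + p_r = p_{r+1} + ... + p_n = p ≥ 4. If p is even and p+2 ≤ q ≤ Φ_even(p)+2, or p is odd and p+3 ≤ q ≤ Φ_odd(p)+2, then the complete multipartite graph K(p_1,...,p_n,q) has orientation number 2. -/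
open Finset

/-!
Merging the parts with index `< r`, the remaining `p_i`, and the last part gives a spanning subgraph
`K(p, p, q)`, and an orientation of diameter 2 of a spanning subgraph extends to the whole graph
(orient the additional edges arbitrarily).

For `K(p, p, q)` write `p = t1 + t2` and cut each side of size `p` into two blocks, so that the four
blocks, of sizes `t1, t2, t2, t1`, form a directed 4-cycle. A vertex `c` of the third part is
determined by a set `F c` of block vertices: `c` sends arcs into `F c` and receives them from its
complement. Distances are at most 2 as soon as no `F c` contains another, both sides occur, every
other `F c` meets and misses each block ("good"), and any two vertices of a block are separated by
some `F c`. Sets of size `p` are pairwise incomparable and `t1` good `p`-sets suffice for the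
separation, so such a family exists for `t1 + 2 ≤ q ≤ #{good p-sets} + 2`. The number of good
`p`-sets is the coefficient of `X ^ p` in `∏ ((X + 1) ^ m - 1 - X ^ m)` over the block sizes `m`,
which is `Φ_even(p)` for `t1 = t2` and `Φ_odd(p)` for `t1 = t2 + 1`.
-/

variable {V W κ : Type*}

def ReachesWithinTwo (D : V → V → Prop) : Prop :=
  ∀ u v, u ≠ v → D u v ∨ ∃ w, D u w ∧ D w v

namespace ReachesWithinTwo

variable {D : V → V → Prop}

lemma exists_hasPath (hD : ReachesWithinTwo D) (u v : V) : ∃ m ≤ 2, hasPath D u v m := by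
  rcases eq_or_ne u v with rfl | huv
  · exact ⟨0, zero_le_two, rfl⟩
  rcases hD u v huv with h | ⟨w, huw, hwv⟩
  · exact ⟨1, one_le_two, v, h, rfl⟩
  · exact ⟨2, le_rfl, w, huw, v, hwv, rfl⟩

lemma isStrong (hD : ReachesWithinTwo D) : IsStrong D :=
  fun u v => (hD.exists_hasPath u v).imp fun _ => And.right

lemma ddiam_le_two (hD : ReachesWithinTwo D) : ddiam V D ≤ 2 := by
  refine iSup₂_le fun u v => ?_
  obtain ⟨m, hm, hpath⟩ := hD.exists_hasPath u v
  exact (sInf_le ⟨m, hpath, rfl⟩ : ddist D u v ≤ m).trans (by exact_mod_cast hm)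

end ReachesWithinTwo

lemma two_le_ddiam_of_not_adj {G : SimpleGraph V} {D : V → V → Prop} (hD : IsOrientation G D)
    {x y : V} (hxy : x ≠ y) (hna : ¬ G.Adj x y) : 2 ≤ ddiam V D := by
  have hxy2 : 2 ≤ ddist D x y := by
    refine le_sInf ?_
    rintro _ ⟨m, hm, rfl⟩
    match m, hm with
    | 0, hm => exact absurd hm hxy
    | 1, ⟨w, hw, hwy⟩ => exact absurd (hwy ▸ hD.1 x w hw) hna
    | k + 2, _ => exact_mod_cast Nat.le_add_left 2 k
  exact hxy2.trans (le_iSup₂ (f := fun u v => ddist D u v) x y)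

lemma card_fiber_sigma_fin {ι : Type*} [Fintype ι] [DecidableEq κ] (f : ι → κ) (a : ι → ℕ)
    (k : κ) : Fintype.card {x : Σ i, Fin (a i) // f x.1 = k} = ∑ i with f i = k, a i := by
  rw [Fintype.card_subtype, Finset.card_filter, Fintype.sum_sigma]
  simp [Finset.sum_filter, apply_ite]

namespace SimpleGraph

def HasOrientationDiamLeTwo (G : SimpleGraph V) : Prop :=
  ∃ D, IsOrientation G D ∧ ReachesWithinTwo D

namespace HasOrientationDiamLeTwo

theorem orientationNumber_eq_two {G : SimpleGraph V} (hG : G.HasOrientationDiamLeTwo) {x y : V}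
    (hxy : x ≠ y) (hna : ¬ G.Adj x y) : orientationNumber G = 2 := by
  obtain ⟨D, hD, hD2⟩ := hG
  refine le_antisymm (sInf_le ⟨D, hD, hD2.isStrong, ?_⟩) (le_sInf ?_)
  · exact le_antisymm hD2.ddiam_le_two (two_le_ddiam_of_not_adj hD hxy hna)
  · rintro _ ⟨D', hD', -, rfl⟩
    exact two_le_ddiam_of_not_adj hD' hxy hna

/-- Edges of `G` outside `H` are oriented along a well-order of the vertices. -/
lemma mono {H G : SimpleGraph V} (hHG : H ≤ G) (hH : H.HasOrientationDiamLeTwo) :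
    G.HasOrientationDiamLeTwo := by
  obtain ⟨D, ⟨hDH, hD⟩, hD2⟩ := hH
  refine ⟨fun u v => D u v ∨ (G.Adj u v ∧ ¬ H.Adj u v ∧ WellOrderingRel u v), ⟨?_, ?_⟩, ?_⟩
  · rintro u v (h | h)
    exacts [hHG (hDH u v h), h.1]
  · intro u v huv
    by_cases hH : H.Adj u v
    · simp [hH, hH.symm, hD u v hH]
    · have hDuv : ¬ D u v := fun h => hH (hDH u v h)
      have hDvu : ¬ D v u := fun h => hH (hDH v u h).symm
      have := G.ne_of_adj huv
      have := trichotomous_of WellOrderingRel u v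
      have := asymm_of WellOrderingRel (a := u) (b := v)
      tauto
  · intro u v huv
    exact (hD2 u v huv).imp .inl fun ⟨w, huw, hwv⟩ => ⟨w, .inl huw, .inl hwv⟩

lemma comap_equiv {G : SimpleGraph W} (e : V ≃ W) (hG : G.HasOrientationDiamLeTwo) :
    (G.comap e).HasOrientationDiamLeTwo := by
  obtain ⟨D, ⟨hDG, hD⟩, hD2⟩ := hG
  refine ⟨fun u v => D (e u) (e v), ⟨fun u v h => hDG _ _ h, fun u v h => hD _ _ h⟩,
    fun u v huv => ?_⟩
  rcases hD2 (e u) (e v) (e.injective.ne huv) with h | ⟨w, huw, hwv⟩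
  · exact .inl h
  · exact .inr ⟨e.symm w, by simpa using huw, by simpa using hwv⟩

lemma comap_of_card_fiber_eq [Fintype V] [Fintype W] [DecidableEq κ] {c : V → κ} {s : W → κ}
    (hcs : ∀ k, Fintype.card {v // c v = k} = Fintype.card {w // s w = k})
    (h : ((⊤ : SimpleGraph κ).comap s).HasOrientationDiamLeTwo) :
    ((⊤ : SimpleGraph κ).comap c).HasOrientationDiamLeTwo := by
  let e : V ≃ W := Equiv.ofFiberEquiv fun k => Fintype.equivOfCardEq (hcs k)
  have he : ∀ v, s (e v) = c v := Equiv.ofFiberEquiv_map _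
  convert h.comap_equiv e
  ext u v
  simp [he]

lemma of_merge {ι : Type*} [Fintype ι] [Fintype κ] [DecidableEq κ] {a : ι → ℕ} {b : κ → ℕ}
    (f : ι → κ) (hab : ∀ k, ∑ i with f i = k, a i = b k)
    (h : (completeMultipartiteGraph fun k => Fin (b k)).HasOrientationDiamLeTwo) :
    (completeMultipartiteGraph fun i => Fin (a i)).HasOrientationDiamLeTwo := by
  refine (h.comap_of_card_fiber_eq (c := f ∘ Sigma.fst) fun k => ?_).mono fun x y hxy => ?_
  · exact (card_fiber_sigma_fin f a k).trans <| (hab k).trans <|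
      ((card_fiber_sigma_fin id b k).trans (by simp [Finset.sum_filter])).symm
  · simp only [comap_adj, top_adj, Function.comp_apply] at hxy ⊢
    exact fun h => hxy (congrArg f h)

end HasOrientationDiamLeTwo

end SimpleGraph

section FourBlocks

variable {β : Fin 4 → Type*} {γ : Type*}

def IsSide (T : Finset (Σ j, β j)) (j : Fin 4) : Prop :=
  ∀ x, x ∈ T ↔ (x.1 : ℕ) % 2 = (j : ℕ) % 2

def IsGood (T : Finset (Σ j, β j)) : Prop :=
  ∀ j, (∃ b, ⟨j, b⟩ ∈ T) ∧ ∃ b, ⟨j, b⟩ ∉ T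

structure IsAdmissible (F : γ → Finset (Σ j, β j)) : Prop where
  exists_mem_notMem : ∀ c c', c ≠ c' → ∃ x ∈ F c, x ∉ F c'
  separates : ∀ j (a b : β j), a ≠ b → ∃ c, ⟨j, a⟩ ∉ F c ∧ ⟨j, b⟩ ∈ F c
  exists_isSide : ∀ j, ∃ c, IsSide (F c) j
  isSide_or_isGood : ∀ c, (∃ j, IsSide (F c) j) ∨ IsGood (F c)

def vertexSide : (Σ j, β j) ⊕ γ → Fin 3
  | .inl x => ⟨(x.1 : ℕ) % 2, by omega⟩
  | .inr _ => 2

def arc (F : γ → Finset (Σ j, β j)) : (Σ j, β j) ⊕ γ → (Σ j, β j) ⊕ γ → Prop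
  | .inl x, .inl y => y.1 = x.1 + 1
  | .inl x, .inr c => x ∉ F c
  | .inr c, .inl y => y ∈ F c
  | .inr _, .inr _ => False

lemma val_add_one_mod_two_ne (j : Fin 4) : ((j + 1 : Fin 4) : ℕ) % 2 ≠ (j : ℕ) % 2 := by
  revert j; decide

lemma isOrientation_arc (F : γ → Finset (Σ j, β j)) :
    IsOrientation ((⊤ : SimpleGraph (Fin 3)).comap vertexSide) (arc F) := by
  constructor
  · rintro (⟨j, a⟩ | c) (⟨j', b⟩ | c') h
    · simp only [arc] at h
      subst h
      simpa [vertexSide, Fin.ext_iff] using (val_add_one_mod_two_ne j).symm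
    · simp [vertexSide, Fin.ext_iff]
      omega
    · simp [vertexSide, Fin.ext_iff]
      omega
    · exact h.elim
  · rintro (⟨j, a⟩ | c) (⟨j', b⟩ | c') hadj <;>
      simp only [arc, SimpleGraph.comap_adj, SimpleGraph.top_adj, vertexSide, ne_eq,
        Fin.ext_iff] at hadj ⊢
    · exact (by decide : ∀ j j' : Fin 4, ¬ (j : ℕ) % 2 = (j' : ℕ) % 2 →
        ((j' : ℕ) = (j + 1 : Fin 4) ↔ ¬ (j : ℕ) = (j' + 1 : Fin 4))) j j' hadj
    all_goals simp_all

namespace IsAdmissible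

variable {F : γ → Finset (Σ j, β j)} [∀ j, Nonempty (β j)]

lemma exists_notMem_succ (hF : IsAdmissible F) {c : γ} {j : Fin 4} {a : β j}
    (ha : ⟨j, a⟩ ∈ F c) : ∃ b : β (j + 1), ⟨j + 1, b⟩ ∉ F c := by
  rcases hF.isSide_or_isGood c with ⟨i, hi⟩ | hgood
  · refine ⟨Classical.arbitrary _, fun hb => ?_⟩
    rw [hi] at ha hb
    exact val_add_one_mod_two_ne j (hb.trans ha.symm)
  · exact (hgood (j + 1)).2

lemma exists_mem_pred (hF : IsAdmissible F) {c : γ} {j : Fin 4} {a : β j}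
    (ha : ⟨j, a⟩ ∉ F c) : ∃ b : β (j - 1), ⟨j - 1, b⟩ ∈ F c := by
  rcases hF.isSide_or_isGood c with ⟨i, hi⟩ | hgood
  · refine ⟨Classical.arbitrary _, ?_⟩
    rw [hi] at ha ⊢
    dsimp only at ha ⊢
    have := val_add_one_mod_two_ne (j - 1)
    rw [sub_add_cancel] at this
    omega
  · exact (hgood (j - 1)).1

theorem reachesWithinTwo_arc (hF : IsAdmissible F) : ReachesWithinTwo (arc F) := by
  rintro (⟨j, a⟩ | c) (⟨j', b⟩ | c') hne
  · obtain rfl | rfl | rfl | rfl :=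
      (by decide : ∀ j j' : Fin 4, j' = j ∨ j' = j + 1 ∨ j' = j + 2 ∨ j' = j + 3) j j'
    · obtain ⟨c, hac, hbc⟩ := hF.separates _ a b fun h => hne (h ▸ rfl)
      exact .inr ⟨.inr c, hac, hbc⟩
    · exact .inl rfl
    · exact .inr ⟨.inl ⟨j + 1, Classical.arbitrary _⟩, rfl,
        (by decide : ∀ j : Fin 4, j + 2 = j + 1 + 1) j⟩
    · obtain ⟨c, hc⟩ := hF.exists_isSide (j + 1)
      refine .inr ⟨.inr c, (hc _).not.mpr (val_add_one_mod_two_ne j).symm, (hc _).mpr ?_⟩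
      exact (by decide : ∀ j : Fin 4, ((j + 3 : Fin 4) : ℕ) % 2 = ((j + 1 : Fin 4) : ℕ) % 2) j
  · by_cases h : ⟨j, a⟩ ∈ F c'
    · obtain ⟨b, hb⟩ := hF.exists_notMem_succ h
      exact .inr ⟨.inl ⟨j + 1, b⟩, rfl, hb⟩
    · exact .inl h
  · by_cases h : ⟨j', b⟩ ∈ F c
    · exact .inl h
    · obtain ⟨a, ha⟩ := hF.exists_mem_pred h
      exact .inr ⟨.inl ⟨j' - 1, a⟩, ha, (sub_add_cancel j' 1).symm⟩
  · obtain ⟨x, hxc, hxc'⟩ := hF.exists_mem_notMem c c' fun h => hne (h ▸ rfl)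
    exact .inr ⟨.inl x, hxc, hxc'⟩

theorem hasOrientationDiamLeTwo (hF : IsAdmissible F) :
    ((⊤ : SimpleGraph (Fin 3)).comap (vertexSide (β := β) (γ := γ))).HasOrientationDiamLeTwo :=
  ⟨arc F, isOrientation_arc F, hF.reachesWithinTwo_arc⟩

end IsAdmissible

end FourBlocks

lemma card_filter_sigma {ι : Type*} [Fintype ι] {β : ι → Type*} [∀ i, Fintype (β i)]
    (P : (Σ i, β i) → Prop) [DecidablePred P] :
    #{x | P x} = ∑ i, #{b : β i | P ⟨i, b⟩} := by
  rw [card_filter, Fintype.sum_sigma]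
  simp only [card_filter]

lemma card_filter_val_eq_iff {m l : ℕ} (hl : l < m) (P : Prop) [Decidable P] :
    #{y : Fin m | (y : ℕ) = l ↔ P} = if P then 1 else m - 1 := by
  split_ifs with hP
  · simp only [hP, iff_true]
    rw [show ({y : Fin m | (y : ℕ) = l} : Finset _) = {⟨l, hl⟩} by ext; simp [Fin.ext_iff],
      card_singleton]
  · simp only [hP, iff_false]
    rw [show ({y : Fin m | ¬ (y : ℕ) = l} : Finset _) = univ.erase ⟨l, hl⟩ by
      ext; simp [Fin.ext_iff]]
    simp

lemma exists_val_eq_iff_and_exists_not {m l : ℕ} (hl : l < m) (hm : 2 ≤ m) (P : Prop) :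
    (∃ y : Fin m, ((y : ℕ) = l ↔ P)) ∧ ∃ y : Fin m, ¬((y : ℕ) = l ↔ P) := by
  have : Nontrivial (Fin m) := Fin.nontrivial_iff_two_le.mpr hm
  obtain ⟨y, hy⟩ := exists_ne (⟨l, hl⟩ : Fin m)
  have hyl : (y : ℕ) ≠ l := fun h => hy (Fin.ext h)
  by_cases hP : P
  · exact ⟨⟨⟨l, hl⟩, by simp [hP]⟩, ⟨y, by simp [hyl, hP]⟩⟩
  · exact ⟨⟨y, by simp [hyl, hP]⟩, ⟨⟨l, hl⟩, by simp [hP]⟩⟩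

section Family

variable {t1 t2 q : ℕ}

def blockSize (t1 t2 : ℕ) : Fin 4 → ℕ := ![t1, t2, t2, t1]

abbrev Blocks (t1 t2 : ℕ) := Σ j, Fin (blockSize t1 t2 j)

lemma le_blockSize {m : ℕ} (h1 : m ≤ t1) (h2 : m ≤ t2) (j : Fin 4) : m ≤ blockSize t1 t2 j := by
  fin_cases j <;> simpa [blockSize]

lemma blockSize_le {m : ℕ} (h1 : t1 ≤ m) (h2 : t2 ≤ m) (j : Fin 4) : blockSize t1 t2 j ≤ m := by
  fin_cases j <;> simpa [blockSize]

instance (t1 t2 : ℕ) : DecidablePred (IsGood (β := fun j => Fin (blockSize t1 t2 j))) :=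
  fun T => by unfold IsGood; infer_instance

def goodSets (t1 t2 : ℕ) : Finset (Finset (Blocks t1 t2)) := {T | #T = t1 + t2 ∧ IsGood T}

def sideSet (t1 t2 : ℕ) (j : Fin 4) : Finset (Blocks t1 t2) :=
  {x | (x.1 : ℕ) % 2 = (j : ℕ) % 2}

lemma isSide_sideSet (j : Fin 4) : IsSide (sideSet t1 t2 j) j := fun x => by simp [sideSet]

lemma card_sideSet (j : Fin 4) : #(sideSet t1 t2 j) = t1 + t2 := by
  rw [sideSet, card_filter_sigma]
  fin_cases j <;> simp [Fin.sum_univ_four] <;> simp [blockSize, add_comm]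

lemma not_isGood_sideSet (j : Fin 4) : ¬ IsGood (sideSet t1 t2 j) := fun h => by
  obtain ⟨b, hb⟩ := (h (j + 1)).1
  exact val_add_one_mod_two_ne j ((isSide_sideSet j _).mp hb)

def sepLabel (t2 : ℕ) (j : Fin 4) (i : ℕ) : ℕ := if j = 0 ∨ j = 3 then i else i % t2

/-- `separator t1 t2 i` omits the element labelled `i` from blocks 0 and 1 and is that single
element on blocks 2 and 3; on the blocks of size `t2` the label is `i % t2`. -/
def separator (t1 t2 i : ℕ) : Finset (Blocks t1 t2) :=
  {x | (x.2 : ℕ) = sepLabel t2 x.1 i ↔ 2 ≤ x.1}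

lemma sepLabel_lt (ht2 : 0 < t2) {i : ℕ} (hi : i < t1) (j : Fin 4) :
    sepLabel t2 j i < blockSize t1 t2 j := by
  fin_cases j <;> simp [sepLabel, blockSize, hi, Nat.mod_lt _ ht2]

lemma exists_sepLabel_eq (ht : t2 ≤ t1) (j : Fin 4) {y : ℕ} (hy : y < blockSize t1 t2 j) :
    ∃ i < t1, sepLabel t2 j i = y := by
  refine ⟨y, hy.trans_le (blockSize_le le_rfl ht j), ?_⟩
  unfold sepLabel
  split_ifs with hj
  · rfl
  · exact Nat.mod_eq_of_lt (by fin_cases j <;> simp_all [blockSize])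

lemma card_separator (ht2 : 0 < t2) {i : ℕ} (hi : i < t1) : #(separator t1 t2 i) = t1 + t2 := by
  rw [separator, card_filter_sigma]
  simp only [card_filter_val_eq_iff (sepLabel_lt ht2 hi _), Fin.sum_univ_four]
  simp [blockSize]
  omega

lemma isGood_separator (ht2 : 2 ≤ t2) (ht : t2 ≤ t1) {i : ℕ} (hi : i < t1) :
    IsGood (separator t1 t2 i) := fun j => by
  simpa [separator] using exists_val_eq_iff_and_exists_not (sepLabel_lt (by omega) hi j)
    (le_blockSize (ht2.trans ht) ht2 j) (2 ≤ j)

lemma exists_separator (ht : t2 ≤ t1) (j : Fin 4) (a b : Fin (blockSize t1 t2 j)) (hab : a ≠ b) :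
    ∃ i < t1, ⟨j, a⟩ ∉ separator t1 t2 i ∧ ⟨j, b⟩ ∈ separator t1 t2 i := by
  have hab' : (a : ℕ) ≠ b := Fin.val_ne_of_ne hab
  by_cases hj : 2 ≤ j
  · obtain ⟨i, hi, hib⟩ := exists_sepLabel_eq ht j b.isLt
    exact ⟨i, hi, by simp [separator, hib, hj, hab']⟩
  · obtain ⟨i, hi, hia⟩ := exists_sepLabel_eq ht j a.isLt
    exact ⟨i, hi, by simp [separator, hia, hj, hab'.symm]⟩

lemma isAdmissible_insert_sideSet {X : Finset (Finset (Blocks t1 t2))} (ht : t2 ≤ t1)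
    (hX : X ⊆ goodSets t1 t2) (hsepX : (range t1).image (separator t1 t2) ⊆ X) :
    IsAdmissible fun T : ↥(insert (sideSet t1 t2 0) (insert (sideSet t1 t2 1) X)) =>
      (T : Finset (Blocks t1 t2)) := by
  have hgood : ∀ T ∈ X, #T = t1 + t2 ∧ IsGood T := fun T hT => by simpa [goodSets] using hX hT
  refine ⟨fun c c' hcc' => ?_, fun j a b hab => ?_, fun j => ?_, fun c => ?_⟩
  · have hcard : ∀ T ∈ insert (sideSet t1 t2 0) (insert (sideSet t1 t2 1) X), #T = t1 + t2 := by
      simpa [card_sideSet] using fun T hT => (hgood T hT).1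
    by_contra! hsub
    exact hcc' (Subtype.ext (eq_of_subset_of_card_le hsub (by rw [hcard _ c.2, hcard _ c'.2])))
  · obtain ⟨i, hi, hia, hib⟩ := exists_separator ht j a b hab
    exact ⟨⟨separator t1 t2 i, mem_insert_of_mem (mem_insert_of_mem
      (hsepX (mem_image_of_mem _ (mem_range.2 hi))))⟩, hia, hib⟩
  · obtain hj | hj : (j : ℕ) % 2 = 0 ∨ (j : ℕ) % 2 = 1 := by omega
    · exact ⟨⟨sideSet t1 t2 0, mem_insert_self _ _⟩, fun x => by simp [sideSet, hj]⟩
    · exact ⟨⟨sideSet t1 t2 1, mem_insert_of_mem (mem_insert_self _ _)⟩,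
        fun x => by simp [sideSet, hj]⟩
  · obtain ⟨T, hT⟩ := c
    rcases mem_insert.1 hT with rfl | hT
    · exact .inl ⟨0, isSide_sideSet 0⟩
    rcases mem_insert.1 hT with rfl | hT
    · exact .inl ⟨1, isSide_sideSet 1⟩
    · exact .inr (hgood T hT).2

theorem exists_isAdmissible (ht2 : 2 ≤ t2) (ht : t2 ≤ t1) (hq₁ : t1 + 2 ≤ q)
    (hq₂ : q ≤ #(goodSets t1 t2) + 2) :
    ∃ S : Finset (Finset (Blocks t1 t2)), #S = q ∧
      IsAdmissible fun T : S => (T : Finset (Blocks t1 t2)) := by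
  have hseps : (range t1).image (separator t1 t2) ⊆ goodSets t1 t2 := by
    simp only [image_subset_iff, mem_range, goodSets, mem_filter, mem_univ, true_and]
    exact fun i hi => ⟨card_separator (by omega) hi, isGood_separator ht2 ht hi⟩
  obtain ⟨X, hsepX, hX, hXcard⟩ := exists_subsuperset_card_eq hseps (n := q - 2)
    (card_image_le.trans (by rw [card_range]; omega)) (by omega)
  have hside : ∀ j, sideSet t1 t2 j ∉ X := fun j h =>
    not_isGood_sideSet j (mem_filter.1 (hX h)).2.2
  have hne : sideSet t1 t2 0 ≠ sideSet t1 t2 1 := fun h => by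
    have h0 : (⟨0, ⟨0, le_blockSize (by omega) (by omega) 0⟩⟩ : Blocks t1 t2) ∈
        sideSet t1 t2 0 := by
      simp [sideSet]
    rw [h] at h0
    simp [sideSet] at h0
  refine ⟨_, ?_, isAdmissible_insert_sideSet ht hX hsepX⟩
  rw [card_insert_of_notMem (by simp [hne, hside 0]), card_insert_of_notMem (hside 1), hXcard]
  omega

lemma card_fiber_vertexSide [Fintype γ] (k : Fin 3) :
    Fintype.card {w : Blocks t1 t2 ⊕ γ // vertexSide w = k} =
      ![t1 + t2, t1 + t2, Fintype.card γ] k := by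
  rw [Fintype.card_subtype, card_filter, Fintype.sum_sum_type, Fintype.sum_sigma]
  fin_cases k <;> simp [vertexSide, Fin.sum_univ_four, Fin.ext_iff] <;> simp [blockSize, add_comm]

theorem hasOrientationDiamLeTwo_Ktri (ht2 : 2 ≤ t2) (ht : t2 ≤ t1) (hq₁ : t1 + 2 ≤ q)
    (hq₂ : q ≤ #(goodSets t1 t2) + 2) :
    (Ktri (t1 + t2) (t1 + t2) q).HasOrientationDiamLeTwo := by
  obtain ⟨S, hS, hF⟩ := exists_isAdmissible ht2 ht hq₁ hq₂
  have : ∀ j, Nonempty (Fin (blockSize t1 t2 j)) := fun j =>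
    Fin.pos_iff_nonempty.mp (le_blockSize (by omega) (by omega) j)
  refine hF.hasOrientationDiamLeTwo.comap_of_card_fiber_eq fun k => ?_
  rw [card_fiber_vertexSide, Fintype.card_coe, hS]
  exact (card_fiber_sigma_fin id _ k).trans (by simp [Finset.sum_filter])

end Family

section Counting

open Polynomial

variable {ι : Type*} [Fintype ι] [DecidableEq ι] {β : ι → Type*}

noncomputable def finsetSigmaEquivPi : Finset (Σ i, β i) ≃ ∀ i, Finset (β i) where
  toFun T i := T.preimage (Sigma.mk i) sigma_mk_injective.injOn
  invFun f := univ.sigma f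
  left_inv T := T.sigma_preimage_mk_of_subset (subset_univ _)
  right_inv f := by ext i x; simp

lemma card_finsetSigmaEquivPi_symm (f : ∀ i, Finset (β i)) :
    #(finsetSigmaEquivPi.symm f) = ∑ i, #(f i) :=
  card_sigma _ _

lemma sum_X_pow_card_filter_finsetSigmaEquivPi [∀ i, Fintype (β i)]
    (P : ∀ i, Finset (β i) → Prop) [∀ i, DecidablePred (P i)] :
    ∑ T : Finset (Σ i, β i) with ∀ i, P i (finsetSigmaEquivPi T i), (X : ℤ[X]) ^ #T =
      ∏ i, ∑ S : Finset (β i) with P i S, (X : ℤ[X]) ^ #S := by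
  simp only [sum_filter, Fintype.prod_sum, Fintype.prod_ite_zero]
  rw [← finsetSigmaEquivPi.symm.sum_comp]
  simp [card_finsetSigmaEquivPi_symm, prod_pow_eq_pow_sum]

lemma card_filter_finsetSigmaEquivPi [∀ i, Fintype (β i)] (P : ∀ i, Finset (β i) → Prop)
    [∀ i, DecidablePred (P i)] (k : ℕ) :
    (#{T : Finset (Σ i, β i) | #T = k ∧ ∀ i, P i (finsetSigmaEquivPi T i)} : ℤ) =
      (∏ i, ∑ S : Finset (β i) with P i S, (X : ℤ[X]) ^ #S).coeff k := by
  rw [← sum_X_pow_card_filter_finsetSigmaEquivPi, finsetSum_coeff]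
  simp [coeff_X_pow, sum_boole, filter_filter, eq_comm, and_comm]

end Counting

section GoodSetCount

open Polynomial

variable {t1 t2 : ℕ}

noncomputable def properSubsetsPoly (s : ℕ) : ℤ[X] := (X + 1) ^ s - 1 - X ^ s

lemma sum_X_pow_card_nonempty_ne_univ {α : Type*} [Fintype α] [DecidableEq α] [Nonempty α] :
    ∑ S : Finset α with S.Nonempty ∧ S ≠ univ, (X : ℤ[X]) ^ #S =
      properSubsetsPoly (Fintype.card α) := by
  have hall : ∑ S : Finset α, (X : ℤ[X]) ^ #S = (X + 1) ^ Fintype.card α := by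
    simpa using Fintype.sum_pow_mul_eq_add_pow α (X : ℤ[X]) 1
  have hrest : ({S | ¬ (S.Nonempty ∧ S ≠ univ)} : Finset (Finset α)) = {∅, univ} := by
    ext S
    simp [imp_iff_not_or, not_nonempty_iff_eq_empty]
  rw [properSubsetsPoly, ← hall, ← sum_filter_add_sum_filter_not univ
    (fun S : Finset α => S.Nonempty ∧ S ≠ univ), hrest, sum_pair univ_nonempty.ne_empty.symm]
  simp only [card_empty, pow_zero, card_univ]
  ring

lemma isGood_iff_finsetSigmaEquivPi {β : Fin 4 → Type*} [∀ j, Fintype (β j)]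
    (T : Finset (Σ j, β j)) :
    IsGood T ↔ ∀ j, (finsetSigmaEquivPi T j).Nonempty ∧ finsetSigmaEquivPi T j ≠ univ := by
  simp [IsGood, finsetSigmaEquivPi, Finset.Nonempty, Finset.eq_univ_iff_forall]

lemma card_goodSets (ht1 : 1 ≤ t1) (ht2 : 1 ≤ t2) :
    (#(goodSets t1 t2) : ℤ) = (properSubsetsPoly t1 * properSubsetsPoly t2 *
      properSubsetsPoly t2 * properSubsetsPoly t1).coeff (t1 + t2) := by
  have : ∀ j, Nonempty (Fin (blockSize t1 t2 j)) := fun j =>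
    Fin.pos_iff_nonempty.mp (le_blockSize ht1 ht2 j)
  rw [goodSets, filter_congr fun T _ => by rw [isGood_iff_finsetSigmaEquivPi]]
  convert card_filter_finsetSigmaEquivPi (fun j (S : Finset (Fin (blockSize t1 t2 j))) =>
    S.Nonempty ∧ S ≠ univ) (t1 + t2) using 3
  · ext
    simp only [mem_filter]
  · rw [Fin.prod_univ_four]
    simp only [sum_X_pow_card_nonempty_ne_univ, Fintype.card_fin]
    rfl

end GoodSetCount

section Phi

open Polynomial

def phiEven (p : ℕ) : ℤ :=
  (2 * p).choose p - 8 * (3 * p / 2).choose p + 12 * p.choose (p / 2) - 6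

def phiOdd (p : ℕ) : ℤ :=
  (2 * p).choose p - 4 * (3 * (p / 2) + 2).choose (p / 2 + 1)
    - 4 * (3 * (p / 2) + 1).choose (p / 2) + 2 * (2 * (p / 2) + 2).choose (p / 2 + 1)
    + 8 * (2 * (p / 2) + 1).choose (p / 2) + 2 * (2 * (p / 2)).choose (p / 2) - 4

lemma card_goodSets_eq_phiEven {h : ℕ} (hh : 1 ≤ h) :
    (#(goodSets h h) : ℤ) = phiEven (2 * h) := by
  -- binomial expansion of `((X + 1) ^ h - (1 + X ^ h)) ^ 4`
  have hexp : properSubsetsPoly h * properSubsetsPoly h * properSubsetsPoly h *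
      properSubsetsPoly h =
      (X + 1) ^ (4 * h) - 4 * (X + 1) ^ (3 * h) * (1 + X ^ h)
      + 6 * (X + 1) ^ (2 * h) * (1 + 2 * X ^ h + X ^ (2 * h))
      - 4 * (X + 1) ^ h * (1 + 3 * X ^ h + 3 * X ^ (2 * h) + X ^ (3 * h))
      + (1 + 4 * X ^ h + 6 * X ^ (2 * h) + 4 * X ^ (3 * h) + X ^ (4 * h)) := by
    simp only [properSubsetsPoly]
    ring
  have hsymm : (3 * h).choose h = (3 * h).choose (2 * h) := by
    rw [show 3 * h = 2 * h + h by ring, Nat.choose_symm_add]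
  rw [card_goodSets hh hh, hexp, phiEven, show h + h = 2 * h by ring,
    show 2 * (2 * h) = 4 * h by ring, show 3 * (2 * h) / 2 = 3 * h by omega,
    show 2 * h / 2 = h by omega]
  simp [mul_add, ← mul_assoc, coeff_X_add_one_pow, coeff_mul_X_pow', coeff_X_pow, coeff_one,
    show 2 * h - h = h by omega, show h ≠ 0 by omega, show ¬ 3 * h ≤ 2 * h by omega,
    show 2 * h ≠ h by omega, show h ≤ 2 * h by omega,
    Nat.choose_eq_zero_of_lt (show h < 2 * h by omega), hsymm]
  ring

lemma card_goodSets_eq_phiOdd {x : ℕ} (hx : 1 ≤ x) :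
    (#(goodSets (x + 1) x) : ℤ) = phiOdd (2 * x + 1) := by
  -- `((X + 1) ^ (x + 1) - (1 + X ^ (x + 1))) ^ 2 * ((X + 1) ^ x - (1 + X ^ x)) ^ 2`, expanded and
  -- grouped by powers of `X + 1`
  have hexp : properSubsetsPoly (x + 1) * properSubsetsPoly x * properSubsetsPoly x *
      properSubsetsPoly (x + 1) =
      (X + 1) ^ (4 * x + 2) - 2 * (X + 1) ^ (3 * x + 2) * (1 + X ^ x)
      + (X + 1) ^ (2 * x + 2) * (1 + 2 * X ^ x + X ^ (2 * x))
      - 2 * (X + 1) ^ (3 * x + 1) * (1 + X ^ (x + 1))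
      + 4 * (X + 1) ^ (2 * x + 1) * (1 + X ^ x + X ^ (x + 1) + X ^ (2 * x + 1))
      - 2 * (X + 1) ^ (x + 1) *
        (1 + 2 * X ^ x + X ^ (x + 1) + X ^ (2 * x) + 2 * X ^ (2 * x + 1) + X ^ (3 * x + 1))
      + (X + 1) ^ (2 * x) * (1 + 2 * X ^ (x + 1) + X ^ (2 * x + 2))
      - 2 * (X + 1) ^ x *
        (1 + X ^ x + 2 * X ^ (x + 1) + 2 * X ^ (2 * x + 1) + X ^ (2 * x + 2) + X ^ (3 * x + 2))
      + (1 + 2 * X ^ x + X ^ (2 * x) + 2 * X ^ (x + 1) + 4 * X ^ (2 * x + 1)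
        + 2 * X ^ (3 * x + 1) + X ^ (2 * x + 2) + 2 * X ^ (3 * x + 2) + X ^ (4 * x + 2)) := by
    simp only [properSubsetsPoly]
    ring
  have hsymm₁ : (3 * x + 2).choose (2 * x + 1) = (3 * x + 2).choose (x + 1) := by
    rw [show 3 * x + 2 = (2 * x + 1) + (x + 1) by ring, Nat.choose_symm_add]
  have hsymm₂ : (3 * x + 1).choose (2 * x + 1) = (3 * x + 1).choose x := by
    rw [show 3 * x + 1 = (2 * x + 1) + x by ring, Nat.choose_symm_add]
  have hsymm₃ : (2 * x + 1).choose (x + 1) = (2 * x + 1).choose x := by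
    rw [show 2 * x + 1 = (x + 1) + x by ring, Nat.choose_symm_add]
  rw [card_goodSets (by omega) hx, hexp, phiOdd, show x + 1 + x = 2 * x + 1 by ring,
    show 2 * (2 * x + 1) = 4 * x + 2 by ring, show (2 * x + 1) / 2 = x by omega]
  simp [mul_add, ← mul_assoc, coeff_X_add_one_pow, coeff_mul_X_pow', coeff_X_pow, coeff_one,
    show 2 * x + 1 - x = x + 1 by omega, show 2 * x - x = x by omega,
    show x ≤ 2 * x by omega, show x ≤ 2 * x + 1 by omega,
    show ¬ 3 * x ≤ 2 * x by omega, show ¬ 3 * x < 2 * x by omega,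
    show 2 * x ≠ x by omega, show 2 * x + 1 ≠ x by omega, show x ≠ 0 by omega,
    show 2 * x ≠ 3 * x + 1 by omega, show 2 * x ≠ 4 * x + 1 by omega,
    Nat.choose_eq_zero_of_lt (show x + 1 < 2 * x + 1 by omega),
    Nat.choose_eq_zero_of_lt (show x < 2 * x + 1 by omega), hsymm₁, hsymm₂, hsymm₃]
  ring

lemma exists_blockSizes {p q : ℕ} (hp : 4 ≤ p)
    (hq : (Even p ∧ p + 2 ≤ q ∧ (q : ℤ) ≤ phiEven p + 2) ∨
      (Odd p ∧ p + 3 ≤ q ∧ (q : ℤ) ≤ phiOdd p + 2)) :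
    ∃ t1 t2, 2 ≤ t2 ∧ t2 ≤ t1 ∧ t1 + t2 = p ∧ t1 + 2 ≤ q ∧ q ≤ #(goodSets t1 t2) + 2 := by
  rcases hq with ⟨hev, hq₁, hq₂⟩ | ⟨⟨x, rfl⟩, hq₁, hq₂⟩
  · obtain ⟨h, rfl⟩ := even_iff_two_dvd.mp hev
    have := card_goodSets_eq_phiEven (h := h) (by omega)
    exact ⟨h, h, by omega, le_rfl, by ring, by omega, by omega⟩
  · have := card_goodSets_eq_phiOdd (x := x) (by omega)
    exact ⟨x + 1, x, by omega, by omega, by ring, by omega, by omega⟩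

end Phi

def mergeIndex (n r : ℕ) : Fin (n + 1) → Fin 3 :=
  Fin.snoc (fun i : Fin n => if (i : ℕ) < r then 0 else 1) 2

lemma sum_snoc_filter_mergeIndex {n r p₁ p₂ : ℕ} {pp : Fin n → ℕ} (q : ℕ)
    (h1 : ∑ i ∈ univ.filter (fun i : Fin n => (i : ℕ) < r), pp i = p₁)
    (h2 : ∑ i ∈ univ.filter (fun i : Fin n => r ≤ (i : ℕ)), pp i = p₂) (k : Fin 3) :
    ∑ i with mergeIndex n r i = k, (Fin.snoc pp q : Fin (n + 1) → ℕ) i = ![p₁, p₂, q] k := by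
  rw [sum_filter, Fin.sum_univ_castSucc]
  simp only [mergeIndex, Fin.snoc_castSucc, Fin.snoc_last]
  fin_cases k <;> simp [← h1, ← h2, sum_filter, ite_eq_iff]

theorem multipartite_orientation_number_general (n : ℕ) (pp : Fin n → ℕ)
    (q p r : ℕ) (hp4 : 4 ≤ p)
    (h1 : ∑ i ∈ Finset.univ.filter (fun i : Fin n => (i : ℕ) < r), pp i = p)
    (h2 : ∑ i ∈ Finset.univ.filter (fun i : Fin n => r ≤ (i : ℕ)), pp i = p)
    (hq : (Even p ∧ p + 2 ≤ q ∧
            (q : ℤ) ≤ (2 * p).choose p - 8 * (3 * p / 2).choose p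
              + 12 * p.choose (p / 2) - 6 + 2) ∨
          (Odd p ∧ p + 3 ≤ q ∧
            (q : ℤ) ≤ (2 * p).choose p - 4 * (3 * (p / 2) + 2).choose (p / 2 + 1)
              - 4 * (3 * (p / 2) + 1).choose (p / 2)
              + 2 * (2 * (p / 2) + 2).choose (p / 2 + 1)
              + 8 * (2 * (p / 2) + 1).choose (p / 2)
              + 2 * (2 * (p / 2)).choose (p / 2) - 4 + 2)) :
    orientationNumber
      (SimpleGraph.completeMultipartiteGraph fun i : Fin (n + 1) => Fin ((Fin.snoc pp q : Fin (n + 1) → ℕ) i)) = 2 := by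
  obtain ⟨t1, t2, ht2, ht, rfl, hq₁, hq₂⟩ := exists_blockSizes hp4 hq
  have hG := SimpleGraph.HasOrientationDiamLeTwo.of_merge (b := ![t1 + t2, t1 + t2, q])
    (mergeIndex n r) (sum_snoc_filter_mergeIndex q h1 h2)
    (hasOrientationDiamLeTwo_Ktri ht2 ht hq₁ hq₂)
  exact hG.orientationNumber_eq_two (x := ⟨Fin.last n, ⟨0, by simp; omega⟩⟩)
    (y := ⟨Fin.last n, ⟨1, by simp; omega⟩⟩) (by simp) (by simp)

/-- If the parts of `K(p_1,…,p_n)` can be split into two groups each of total size `p ≥ 4`,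
and `q` lies in the stated range (governed by `Φ_even(p)` resp. `Φ_odd(p)` in closed form),
then `K(p_1,…,p_n,q)` has orientation number 2. -/
theorem multipartite_orientation_number (n : ℕ) (hn : 2 ≤ n) (pp : Fin n → ℕ)
    (hpp : ∀ i, 1 ≤ pp i) (q p r : ℕ) (hr : r ≤ n) (hp4 : 4 ≤ p)
    (h1 : ∑ i ∈ Finset.univ.filter (fun i : Fin n => (i : ℕ) < r), pp i = p)
    (h2 : ∑ i ∈ Finset.univ.filter (fun i : Fin n => r ≤ (i : ℕ)), pp i = p)
    (hq : (Even p ∧ p + 2 ≤ q ∧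
            (q : ℤ) ≤ (2 * p).choose p - 8 * (3 * p / 2).choose p
              + 12 * p.choose (p / 2) - 6 + 2) ∨
          (Odd p ∧ p + 3 ≤ q ∧
            (q : ℤ) ≤ (2 * p).choose p - 4 * (3 * (p / 2) + 2).choose (p / 2 + 1)
              - 4 * (3 * (p / 2) + 1).choose (p / 2)
              + 2 * (2 * (p / 2) + 2).choose (p / 2 + 1)
              + 8 * (2 * (p / 2) + 1).choose (p / 2)
              + 2 * (2 * (p / 2)).choose (p / 2) - 4 + 2)) :
    orientationNumber
      (SimpleGraph.completeMultipartiteGraph fun i : Fin (n + 1) => Fin ((Fin.snoc pp q : Fin (n + 1) → ℕ) i)) = 2 :=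
  multipartite_orientation_number_general n pp q p r hp4 h1 h2 hq
end
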